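/- arXiv:2110.04215 — 6 statements merged into one kernel-verified Lean document; each statement's English description precedes it below -/
import Mathlib

section
/- Let (f_t,g_t) be a deformation of order n of a 3-LieDer pair (L,θ_L), and let (Ω³_{n+1}, Ω²_{n+1}) be the associated obstruction 3-cochain. Then (Ω³_{n+1}, Ω²_{n+1}) is closed: ∂(Ω³_{n+1}, Ω²_{n+1}) = 0, i.e., (Ω³_{n+1}, Ω²_{n+1}) ∈ Z³_{3-LieDer}(L;L). -/
open Function Finset

/-- Total skew-symmetry of a trilinear map (generated by adjacent transpositions). -/
def SkewTri {L V : Type*} [AddCommGroup V] (f : L → L → L → V) : Prop :=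
  (∀ x y z, f x y z = - f y x z) ∧ (∀ x y z, f x y z = - f x z y)

/-- The fundamental identity of a 3-Lie algebra. -/
def FundId {L : Type*} [AddCommGroup L] (f : L → L → L → L) : Prop :=
  ∀ x1 x2 x3 x4 x5,
    f x1 x2 (f x3 x4 x5)
      = f (f x1 x2 x3) x4 x5 + f x3 (f x1 x2 x4) x5 + f x3 x4 (f x1 x2 x5)

/-- Trilinearity of a map `L × L × L → V`. -/
def IsTrilin (F : Type*) {L V : Type*} [Field F] [AddCommGroup L] [Module F L]
    [AddCommGroup V] [Module F V] (f : L → L → L → V) : Prop :=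
  (∀ y z, IsLinearMap F (fun x => f x y z)) ∧
  (∀ x z, IsLinearMap F (fun y => f x y z)) ∧
  (∀ x y, IsLinearMap F (fun z => f x y z))

/-- `θ` is a derivation of the ternary bracket `f`. -/
def IsDeriv3 {W : Type*} [AddCommGroup W] (f : W → W → W → W) (θ : W → W) : Prop :=
  ∀ x y z, θ (f x y z) = f (θ x) y z + f x (θ y) z + f x y (θ z)

/-- `ρ` is a representation of the 3-Lie algebra `(L,f)` on `V`. -/
def IsRep3 (F : Type*) {L V : Type*} [Field F] [AddCommGroup L] [Module F L]
    [AddCommGroup V] [Module F V] (f : L → L → L → L) (ρ : L → L → V → V) : Prop :=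
  (∀ y v, IsLinearMap F (fun x => ρ x y v)) ∧
  (∀ x v, IsLinearMap F (fun y => ρ x y v)) ∧
  (∀ x y, IsLinearMap F (ρ x y)) ∧
  (∀ x y v, ρ x y v = - ρ y x v) ∧
  (∀ x1 x2 x3 x4 v, ρ x1 x2 (ρ x3 x4 v)
      = ρ (f x1 x2 x3) x4 v + ρ x3 (f x1 x2 x4) v + ρ x3 x4 (ρ x1 x2 v)) ∧
  (∀ x1 x2 x3 x4 v, ρ x1 (f x2 x3 x4) v
      = ρ x3 x4 (ρ x1 x2 v) - ρ x2 x4 (ρ x1 x3 v) + ρ x2 x3 (ρ x1 x4 v))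

/-- `(ρ, θV)` is a representation of the 3-LieDer pair `(L, f, θL)` on `V`. -/
def IsRepPair (F : Type*) {L V : Type*} [Field F] [AddCommGroup L] [Module F L]
    [AddCommGroup V] [Module F V] (f : L → L → L → L) (θL : L → L)
    (ρ : L → L → V → V) (θV : V → V) : Prop :=
  IsRep3 F f ρ ∧
  ∀ x y v, θV (ρ x y v) - ρ x y (θV v) = ρ (θL x) y v + ρ x (θL y) v

section Deformations

/-- Formal power series with coefficients in `L`, i.e. the module `L[[t]]`. -/
abbrev LTSeries3 (L : Type*) := ℕ → L

variable {L A : Type*} [AddCommGroup L] [AddCommGroup A]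

/-- The `F[[t]]`-trilinear extension `f_t = Σ fᵢ tⁱ` of a family of trilinear maps
to `L[[t]]`, computed by convolution of coefficients. -/
def Ft (f : ℕ → L → L → L → L) : LTSeries3 L → LTSeries3 L → LTSeries3 L → LTSeries3 L :=
  fun a b c n =>
    ∑ p ∈ Finset.range (n + 1), ∑ q ∈ Finset.range (n + 1 - p),
      ∑ r ∈ Finset.range (n + 1 - p - q),
        f p (a q) (b r) (c (n - p - q - r))

/-- The `F[[t]]`-linear extension `g_t = Σ gᵢ tⁱ` of a family of linear maps to
`L[[t]]`. -/
def Gt (g : ℕ → L → L) : LTSeries3 L → LTSeries3 L :=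
  fun a n => ∑ p ∈ Finset.range (n + 1), g p (a (n - p))

/-- `(f_t, g_t)` is a one-parameter formal deformation of the 3-LieDer pair
`(L, bracket, θ)`: each `fᵢ` is trilinear skew-symmetric with `f₀` the original
bracket, each `gᵢ` is linear with `g₀ = θ`, and `(L[[t]], f_t, g_t)` is a
3-LieDer pair over `F[[t]]`. -/
def IsDeformation (F : Type*) {L : Type*} [Field F] [AddCommGroup L] [Module F L]
    (bracket : L → L → L → L) (θ : L → L)
    (f : ℕ → L → L → L → L) (g : ℕ → L → L) : Prop :=
  f 0 = bracket ∧ g 0 = θ ∧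
  (∀ i, IsTrilin F (f i)) ∧ (∀ i, SkewTri (f i)) ∧ (∀ i, IsLinearMap F (g i)) ∧
  FundId (Ft f) ∧ IsDeriv3 (Ft f) (Gt g)

/-- The coboundary `d : C¹(B;A) → C²(B;A)` with coefficients in `ρ`. -/
def d1c {B : Type*} (br : B → B → B → B) (ρ : B → B → A → A) (χ : B → A) :
    B → B → B → A :=
  fun x y z => ρ x y (χ z) - χ (br x y z) + ρ y z (χ x) - ρ x z (χ y)

/-- The coboundary `d : C²(B;A) → C³(B;A)` with coefficients in `ρ`. -/
def d2c {B : Type*} (br : B → B → B → B) (ρ : B → B → A → A) (ψ : B → B → B → A) :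
    B → B → B → B → B → A :=
  fun x1 x2 x3 x4 z =>
    - ψ (br x1 x2 x3) x4 z - ψ x3 (br x1 x2 x4) z
    - ψ x3 x4 (br x1 x2 z) + ψ x1 x2 (br x3 x4 z)
    + ρ x1 x2 (ψ x3 x4 z) - ρ x3 x4 (ψ x1 x2 z)
    - ρ x4 z (ψ x1 x2 x3) + ρ x3 z (ψ x1 x2 x4)

/-- The coboundary `d : C³(B;A) → C⁴(B;A)` with coefficients in `ρ` (arguments
`(a₁∧b₁, a₂∧b₂, a₃∧b₃, z)`). -/
def d3c {B : Type*} (br : B → B → B → B) (ρ : B → B → A → A)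
    (α : B → B → B → B → B → A) : B → B → B → B → B → B → B → A :=
  fun a1 b1 a2 b2 a3 b3 z =>
    - α (br a1 b1 a2) b2 a3 b3 z - α a2 (br a1 b1 b2) a3 b3 z
    - α a2 b2 (br a1 b1 a3) b3 z - α a2 b2 a3 (br a1 b1 b3) z
    + α a1 b1 (br a2 b2 a3) b3 z + α a1 b1 a3 (br a2 b2 b3) z
    - α a2 b2 a3 b3 (br a1 b1 z) + α a1 b1 a3 b3 (br a2 b2 z)
    - α a1 b1 a2 b2 (br a3 b3 z)
    + ρ a1 b1 (α a2 b2 a3 b3 z) - ρ a2 b2 (α a1 b1 a3 b3 z)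
    + ρ a3 b3 (α a1 b1 a2 b2 z)
    + ρ b3 z (α a1 b1 a2 b2 a3) - ρ a3 z (α a1 b1 a2 b2 b3)

/-- The operator `δ : C¹(B;A) → C¹(B;A)`. -/
def delta1c {B : Type*} (θB : B → B) (θA : A → A) (χ : B → A) : B → A :=
  fun z => χ (θB z) - θA (χ z)

/-- The operator `δ : C²(B;A) → C²(B;A)`. -/
def delta2c {B : Type*} (θB : B → B) (θA : A → A) (ψ : B → B → B → A) :
    B → B → B → A :=
  fun x y z => ψ (θB x) y z + ψ x (θB y) z + ψ x y (θB z) - θA (ψ x y z)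

/-- The operator `δ : C³(B;A) → C³(B;A)`. -/
def delta3c {B : Type*} (θB : B → B) (θA : A → A) (α : B → B → B → B → B → A) :
    B → B → B → B → B → A :=
  fun a1 b1 a2 b2 z =>
    α (θB a1) b1 a2 b2 z + α a1 (θB b1) a2 b2 z + α a1 b1 (θB a2) b2 z
    + α a1 b1 a2 (θB b2) z + α a1 b1 a2 b2 (θB z) - θA (α a1 b1 a2 b2 z)

end Deformations

section OrderN

variable {L : Type*} [AddCommGroup L]

/-- `(f_t, g_t) = (Σ_{i≤n} fᵢtⁱ, Σ_{i≤n} gᵢtⁱ)` is a deformation of order `n` of the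
3-LieDer pair `(L, bracket, θ)`: it endows `L[t]/(t^{n+1})` with a 3-LieDer pair
structure over `F[t]/(t^{n+1})`, which amounts to the coefficientwise fundamental
identity and derivation equations in all degrees `N ≤ n`. -/
def IsOrderNDeformation (F : Type*) {L : Type*} [Field F] [AddCommGroup L] [Module F L]
    (bracket : L → L → L → L) (θ : L → L) (n : ℕ)
    (f : ℕ → L → L → L → L) (g : ℕ → L → L) : Prop :=
  f 0 = bracket ∧ g 0 = θ ∧
  (∀ i, IsTrilin F (f i)) ∧ (∀ i, SkewTri (f i)) ∧ (∀ i, IsLinearMap F (g i)) ∧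
  (∀ i, n < i → f i = 0) ∧ (∀ i, n < i → g i = 0) ∧
  (∀ N ≤ n, ∀ x1 x2 x3 x4 x5 : L,
      ∑ i ∈ Finset.range (N + 1),
        (f i (f (N - i) x1 x2 x3) x4 x5 + f i x3 (f (N - i) x1 x2 x4) x5
          + f i x3 x4 (f (N - i) x1 x2 x5) - f i x1 x2 (f (N - i) x3 x4 x5)) = 0) ∧
  (∀ N ≤ n, ∀ x1 x2 x3 : L,
      ∑ i ∈ Finset.range (N + 1),
        (g i (f (N - i) x1 x2 x3) - f (N - i) (g i x1) x2 x3
          - f (N - i) x1 (g i x2) x3 - f (N - i) x1 x2 (g i x3)) = 0)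

/-- The obstruction 3-cochain `Ω³_{n+1}` of a deformation of order `n`. -/
def Omega3 (f : ℕ → L → L → L → L) (n : ℕ) : L → L → L → L → L → L :=
  fun x1 x2 x3 x4 x5 =>
    ∑ i ∈ Finset.Ioo 0 (n + 1),
      (f i (f (n + 1 - i) x1 x2 x3) x4 x5 + f i x3 (f (n + 1 - i) x1 x2 x4) x5
        + f i x3 x4 (f (n + 1 - i) x1 x2 x5) - f i x1 x2 (f (n + 1 - i) x3 x4 x5))

/-- The obstruction 2-cochain `Ω²_{n+1}` of a deformation of order `n`. -/
def Omega2 (f : ℕ → L → L → L → L) (g : ℕ → L → L) (n : ℕ) : L → L → L → L :=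
  fun x1 x2 x3 =>
    ∑ i ∈ Finset.Ioo 0 (n + 1),
      (g i (f (n + 1 - i) x1 x2 x3) - f (n + 1 - i) (g i x1) x2 x3
        - f (n + 1 - i) x1 (g i x2) x3 - f (n + 1 - i) x1 x2 (g i x3))

end OrderN



section MyObstructionAux

variable {F : Type*} [Field F] {L : Type*} [AddCommGroup L] [Module F L]

/-- Composition defect of two ternary maps (fundamental-identity pattern). -/
def Dop (a b : L → L → L → L) : L → L → L → L → L → L := fun x1 x2 x3 x4 x5 =>
  a (b x1 x2 x3) x4 x5 + a x3 (b x1 x2 x4) x5 + a x3 x4 (b x1 x2 x5) - a x1 x2 (b x3 x4 x5)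

def D2op (α : L → L → L → L → L → L) (c : L → L → L → L) :
    L → L → L → L → L → L → L → L := fun a1 b1 a2 b2 a3 b3 z =>
  α (c a1 b1 a2) b2 a3 b3 z + α a2 (c a1 b1 b2) a3 b3 z + α a2 b2 (c a1 b1 a3) b3 z
    + α a2 b2 a3 (c a1 b1 b3) z + α a2 b2 a3 b3 (c a1 b1 z)
    - α a1 b1 (c a2 b2 a3) b3 z - α a1 b1 a3 (c a2 b2 b3) z - α a1 b1 a3 b3 (c a2 b2 z)
    + α a1 b1 a2 b2 (c a3 b3 z)

def D2p (c : L → L → L → L) (α : L → L → L → L → L → L) :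
    L → L → L → L → L → L → L → L := fun a1 b1 a2 b2 a3 b3 z =>
  - c a1 b1 (α a2 b2 a3 b3 z) + c a2 b2 (α a1 b1 a3 b3 z) - c a3 b3 (α a1 b1 a2 b2 z)
    - c b3 z (α a1 b1 a2 b2 a3) + c a3 z (α a1 b1 a2 b2 b3)

def Phiop (h : L → L) (b : L → L → L → L) : L → L → L → L := fun x y z =>
  h (b x y z) - b (h x) y z - b x (h y) z - b x y (h z)

def Phi2op (h : L → L) (α : L → L → L → L → L → L) : L → L → L → L → L → L :=
  fun a1 b1 a2 b2 z =>
  h (α a1 b1 a2 b2 z) - α (h a1) b1 a2 b2 z - α a1 (h b1) a2 b2 z - α a1 b1 (h a2) b2 z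
    - α a1 b1 a2 (h b2) z - α a1 b1 a2 b2 (h z)

/- linearity helpers -/

lemma lsum {h : L → L} (hh : IsLinearMap F h) {ι : Type*} (s : Finset ι) (w : ι → L) :
    h (∑ i ∈ s, w i) = ∑ i ∈ s, h (w i) := by
  have := map_sum (IsLinearMap.mk' h hh) w s
  simp only [IsLinearMap.mk'_apply] at this
  exact this

lemma lzero {h : L → L} (hh : IsLinearMap F h) : h 0 = 0 := hh.map_zero

variable {t : L → L → L → L}

lemma tsum1 (ht : IsTrilin F t) {ι : Type*} (s : Finset ι) (w : ι → L) (y z : L) :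
    t (∑ i ∈ s, w i) y z = ∑ i ∈ s, t (w i) y z := by
  have := map_sum (IsLinearMap.mk' (fun x => t x y z) (ht.1 y z)) w s
  simp only [IsLinearMap.mk'_apply] at this
  exact this

lemma tsum2 (ht : IsTrilin F t) {ι : Type*} (s : Finset ι) (w : ι → L) (x z : L) :
    t x (∑ i ∈ s, w i) z = ∑ i ∈ s, t x (w i) z := by
  have := map_sum (IsLinearMap.mk' (fun y => t x y z) (ht.2.1 x z)) w s
  simp only [IsLinearMap.mk'_apply] at this
  exact this

lemma tsum3 (ht : IsTrilin F t) {ι : Type*} (s : Finset ι) (w : ι → L) (x y : L) :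
    t x y (∑ i ∈ s, w i) = ∑ i ∈ s, t x y (w i) := by
  have := map_sum (IsLinearMap.mk' (fun z => t x y z) (ht.2.2 x y)) w s
  simp only [IsLinearMap.mk'_apply] at this
  exact this

lemma tzero1 (ht : IsTrilin F t) (y z : L) : t 0 y z = 0 := (ht.1 y z).map_zero
lemma tzero2 (ht : IsTrilin F t) (x z : L) : t x 0 z = 0 := (ht.2.1 x z).map_zero
lemma tzero3 (ht : IsTrilin F t) (x y : L) : t x y 0 = 0 := (ht.2.2 x y).map_zero

end MyObstructionAux
section MyObstructionAux2

variable {F : Type*} [Field F] {L : Type*} [AddCommGroup L] [Module F L]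

lemma key_d3c (br : L → L → L → L) (α : L → L → L → L → L → L)
    (a1 b1 a2 b2 a3 b3 z : L) :
    d3c br br α a1 b1 a2 b2 a3 b3 z
      = -(D2op α br a1 b1 a2 b2 a3 b3 z) - D2p br α a1 b1 a2 b2 a3 b3 z := by
  simp only [d3c, D2op, D2p]; abel

lemma key_d2c {br : L → L → L → L} (hsk : SkewTri br) (ψ : L → L → L → L)
    (x1 x2 x3 x4 x5 : L) :
    d2c br br ψ x1 x2 x3 x4 x5
      = -(Dop ψ br x1 x2 x3 x4 x5) - Dop br ψ x1 x2 x3 x4 x5 := by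
  have h1 : br (ψ x1 x2 x3) x4 x5 = br x4 x5 (ψ x1 x2 x3) := by
    rw [hsk.1, hsk.2, neg_neg]
  have h2 : br x3 (ψ x1 x2 x4) x5 = -(br x3 x5 (ψ x1 x2 x4)) := hsk.2 _ _ _
  simp only [d2c, Dop]
  rw [h1, h2]; abel

lemma key_delta3 (θ : L → L) (α : L → L → L → L → L → L) (x1 x2 x3 x4 x5 : L) :
    delta3c θ θ α x1 x2 x3 x4 x5 = -(Phi2op θ α x1 x2 x3 x4 x5) := by
  simp only [delta3c, Phi2op]; abel

lemma sum_d3c {br : L → L → L → L} (hbr : IsTrilin F br) {ι : Type*} (s : Finset ι)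
    (β : ι → L → L → L → L → L → L) (a1 b1 a2 b2 a3 b3 z : L) :
    d3c br br (fun p1 p2 p3 p4 p5 => ∑ i ∈ s, β i p1 p2 p3 p4 p5) a1 b1 a2 b2 a3 b3 z
      = ∑ i ∈ s, d3c br br (β i) a1 b1 a2 b2 a3 b3 z := by
  simp only [d3c, tsum3 hbr, Finset.sum_add_distrib, Finset.sum_sub_distrib, Finset.sum_neg_distrib]

lemma sum_d2c {br : L → L → L → L} (hbr : IsTrilin F br) {ι : Type*} (s : Finset ι)
    (β : ι → L → L → L → L) (x1 x2 x3 x4 x5 : L) :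
    d2c br br (fun p1 p2 p3 => ∑ i ∈ s, β i p1 p2 p3) x1 x2 x3 x4 x5
      = ∑ i ∈ s, d2c br br (β i) x1 x2 x3 x4 x5 := by
  simp only [d2c, tsum3 hbr, Finset.sum_add_distrib, Finset.sum_sub_distrib, Finset.sum_neg_distrib]

lemma sum_delta3c {θ : L → L} (hθ : IsLinearMap F θ) {ι : Type*} (s : Finset ι)
    (β : ι → L → L → L → L → L → L) (x1 x2 x3 x4 x5 : L) :
    delta3c θ θ (fun p1 p2 p3 p4 p5 => ∑ i ∈ s, β i p1 p2 p3 p4 p5) x1 x2 x3 x4 x5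
      = ∑ i ∈ s, delta3c θ θ (β i) x1 x2 x3 x4 x5 := by
  simp only [delta3c, lsum hθ, Finset.sum_add_distrib, Finset.sum_sub_distrib, Finset.sum_neg_distrib]

lemma Dop_sum_left {ι : Type*} (s : Finset ι) (A : ι → L → L → L → L) (c : L → L → L → L)
    (x1 x2 x3 x4 x5 : L) :
    ∑ i ∈ s, Dop (A i) c x1 x2 x3 x4 x5
      = Dop (fun x y z => ∑ i ∈ s, A i x y z) c x1 x2 x3 x4 x5 := by
  simp only [Dop, Finset.sum_add_distrib, Finset.sum_sub_distrib]

lemma Dop_sum_right {a : L → L → L → L} (ha : IsTrilin F a) {ι : Type*} (s : Finset ι)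
    (B : ι → L → L → L → L) (x1 x2 x3 x4 x5 : L) :
    ∑ i ∈ s, Dop a (B i) x1 x2 x3 x4 x5
      = Dop a (fun x y z => ∑ i ∈ s, B i x y z) x1 x2 x3 x4 x5 := by
  simp only [Dop, tsum1 ha, tsum2 ha, tsum3 ha, Finset.sum_add_distrib,
    Finset.sum_sub_distrib]

lemma Dop_zero_left {A : L → L → L → L} (hz : ∀ x y z, A x y z = 0)
    (c : L → L → L → L) (x1 x2 x3 x4 x5 : L) : Dop A c x1 x2 x3 x4 x5 = 0 := by
  simp [Dop, hz]

lemma Dop_zero_right {a : L → L → L → L} (ha : IsTrilin F a) {B : L → L → L → L}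
    (hz : ∀ x y z, B x y z = 0) (x1 x2 x3 x4 x5 : L) : Dop a B x1 x2 x3 x4 x5 = 0 := by
  simp [Dop, hz, tzero1 ha, tzero2 ha, tzero3 ha]

lemma D2op_sum_alpha {ι : Type*} (s : Finset ι) (β : ι → L → L → L → L → L → L)
    (c : L → L → L → L) (a1 b1 a2 b2 a3 b3 z : L) :
    ∑ i ∈ s, D2op (β i) c a1 b1 a2 b2 a3 b3 z
      = D2op (fun p1 p2 p3 p4 p5 => ∑ i ∈ s, β i p1 p2 p3 p4 p5) c a1 b1 a2 b2 a3 b3 z := by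
  simp only [D2op, Finset.sum_add_distrib, Finset.sum_sub_distrib]

lemma D2op_zero_alpha {α : L → L → L → L → L → L}
    (hz : ∀ p1 p2 p3 p4 p5, α p1 p2 p3 p4 p5 = 0) (c : L → L → L → L)
    (a1 b1 a2 b2 a3 b3 z : L) : D2op α c a1 b1 a2 b2 a3 b3 z = 0 := by
  simp [D2op, hz]

lemma D2p_sum_alpha {c : L → L → L → L} (hc : IsTrilin F c) {ι : Type*} (s : Finset ι)
    (β : ι → L → L → L → L → L → L) (a1 b1 a2 b2 a3 b3 z : L) :
    ∑ i ∈ s, D2p c (β i) a1 b1 a2 b2 a3 b3 z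
      = D2p c (fun p1 p2 p3 p4 p5 => ∑ i ∈ s, β i p1 p2 p3 p4 p5) a1 b1 a2 b2 a3 b3 z := by
  simp only [D2p, tsum3 hc, Finset.sum_add_distrib, Finset.sum_sub_distrib, Finset.sum_neg_distrib]

lemma D2p_zero_alpha {c : L → L → L → L} (hc : IsTrilin F c)
    {α : L → L → L → L → L → L} (hz : ∀ p1 p2 p3 p4 p5, α p1 p2 p3 p4 p5 = 0)
    (a1 b1 a2 b2 a3 b3 z : L) : D2p c α a1 b1 a2 b2 a3 b3 z = 0 := by
  simp [D2p, hz, tzero3 hc]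

lemma Phi2_sum_alpha {h : L → L} (hh : IsLinearMap F h) {ι : Type*} (s : Finset ι)
    (β : ι → L → L → L → L → L → L) (x1 x2 x3 x4 x5 : L) :
    ∑ i ∈ s, Phi2op h (β i) x1 x2 x3 x4 x5
      = Phi2op h (fun p1 p2 p3 p4 p5 => ∑ i ∈ s, β i p1 p2 p3 p4 p5) x1 x2 x3 x4 x5 := by
  simp only [Phi2op, lsum hh, Finset.sum_add_distrib, Finset.sum_sub_distrib]

lemma Phi2_zero_alpha {h : L → L} (hh : IsLinearMap F h)
    {α : L → L → L → L → L → L} (hz : ∀ p1 p2 p3 p4 p5, α p1 p2 p3 p4 p5 = 0)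
    (x1 x2 x3 x4 x5 : L) : Phi2op h α x1 x2 x3 x4 x5 = 0 := by
  simp [Phi2op, hz, lzero hh]

end MyObstructionAux2
section MyObstructionAux3

variable {γ : Type*} [AddCommMonoid γ]

/-- Triangle index set `{(i,j) : i+j ≤ m}`. -/
def Tset (m : ℕ) : Finset (ℕ × ℕ) :=
  (Finset.range (m+1) ×ˢ Finset.range (m+1)).filter (fun p => p.1 + p.2 ≤ m)

lemma mem_Tset {m : ℕ} {p : ℕ × ℕ} : p ∈ Tset m ↔ p.1 + p.2 ≤ m := by
  simp only [Tset, Finset.mem_filter, Finset.mem_product, Finset.mem_range]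
  omega

lemma T_bij (m : ℕ) (e e' : ℕ × ℕ → ℕ × ℕ)
    (he : ∀ p : ℕ × ℕ, p.1 + p.2 ≤ m → (e p).1 + (e p).2 ≤ m)
    (he' : ∀ p : ℕ × ℕ, p.1 + p.2 ≤ m → (e' p).1 + (e' p).2 ≤ m)
    (hee : ∀ p : ℕ × ℕ, p.1 + p.2 ≤ m → e' (e p) = p)
    (hee' : ∀ p : ℕ × ℕ, p.1 + p.2 ≤ m → e (e' p) = p)
    (f : ℕ × ℕ → γ) : ∑ p ∈ Tset m, f (e p) = ∑ p ∈ Tset m, f p := by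
  refine Finset.sum_nbij' e e' ?_ ?_ ?_ ?_ ?_
  · intro p hp; exact mem_Tset.2 (he p (mem_Tset.1 hp))
  · intro p hp; exact mem_Tset.2 (he' p (mem_Tset.1 hp))
  · intro p hp; exact hee p (mem_Tset.1 hp)
  · intro p hp; exact hee' p (mem_Tset.1 hp)
  · intro p hp; rfl

lemma T_perm_swap (m : ℕ) (Fn : ℕ → ℕ → ℕ → γ) :
    ∑ p ∈ Tset m, Fn p.1 p.2 (m - p.1 - p.2)
      = ∑ p ∈ Tset m, Fn p.2 p.1 (m - p.1 - p.2) := by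
  have h := T_bij m (fun p => (p.2, p.1)) (fun p => (p.2, p.1))
    (fun p hp => by dsimp only; omega) (fun p hp => by dsimp only; omega)
    (fun p hp => rfl) (fun p hp => rfl)
    (fun p => Fn p.2 p.1 (m - p.2 - p.1))
  calc ∑ p ∈ Tset m, Fn p.1 p.2 (m - p.1 - p.2)
      = ∑ p ∈ Tset m, Fn p.2 p.1 (m - p.2 - p.1) := by exact h
    _ = ∑ p ∈ Tset m, Fn p.2 p.1 (m - p.1 - p.2) := by
        refine Finset.sum_congr rfl (fun p hp => ?_)
        rw [show m - p.2 - p.1 = m - p.1 - p.2 by omega]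

lemma T_perm_23 (m : ℕ) (Fn : ℕ → ℕ → ℕ → γ) :
    ∑ p ∈ Tset m, Fn p.1 p.2 (m - p.1 - p.2)
      = ∑ p ∈ Tset m, Fn p.1 (m - p.1 - p.2) p.2 := by
  have h := T_bij m (fun p => (p.1, m - p.1 - p.2)) (fun p => (p.1, m - p.1 - p.2))
    (fun p hp => by dsimp only; omega) (fun p hp => by dsimp only; omega)
    (fun p hp => by
      obtain ⟨x, y⟩ := p
      have hp2 : x + y ≤ m := hp
      simp only [Prod.mk.injEq, true_and, and_true]
      omega)
    (fun p hp => by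
      obtain ⟨x, y⟩ := p
      have hp2 : x + y ≤ m := hp
      simp only [Prod.mk.injEq, true_and, and_true]
      omega)
    (fun p => Fn p.1 p.2 (m - p.1 - p.2))
  refine (h.symm).trans ?_
  refine Finset.sum_congr rfl (fun p hp => ?_)
  have hp' := mem_Tset.1 hp
  dsimp only
  rw [show m - p.1 - (m - p.1 - p.2) = p.2 by omega]

lemma T_perm_cyc1 (m : ℕ) (Fn : ℕ → ℕ → ℕ → γ) :
    ∑ p ∈ Tset m, Fn p.1 p.2 (m - p.1 - p.2)
      = ∑ p ∈ Tset m, Fn p.2 (m - p.1 - p.2) p.1 := by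
  have h := T_bij m (fun p => (p.2, m - p.1 - p.2)) (fun p => (m - p.1 - p.2, p.1))
    (fun p hp => by dsimp only; omega) (fun p hp => by dsimp only; omega)
    (fun p hp => by
      obtain ⟨x, y⟩ := p
      have hp2 : x + y ≤ m := hp
      simp only [Prod.mk.injEq, true_and, and_true]
      omega)
    (fun p hp => by
      obtain ⟨x, y⟩ := p
      have hp2 : x + y ≤ m := hp
      simp only [Prod.mk.injEq, true_and, and_true]
      omega)
    (fun p => Fn p.1 p.2 (m - p.1 - p.2))
  refine (h.symm).trans ?_
  refine Finset.sum_congr rfl (fun p hp => ?_)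
  have hp' := mem_Tset.1 hp
  dsimp only
  rw [show m - p.2 - (m - p.1 - p.2) = p.1 by omega]

lemma T_perm_cyc2 (m : ℕ) (Fn : ℕ → ℕ → ℕ → γ) :
    ∑ p ∈ Tset m, Fn p.1 p.2 (m - p.1 - p.2)
      = ∑ p ∈ Tset m, Fn (m - p.1 - p.2) p.1 p.2 := by
  have h1 := T_perm_cyc1 m (fun i j k => Fn k i j)
  exact h1.symm

lemma T_perm_13 (m : ℕ) (Fn : ℕ → ℕ → ℕ → γ) :
    ∑ p ∈ Tset m, Fn p.1 p.2 (m - p.1 - p.2)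
      = ∑ p ∈ Tset m, Fn (m - p.1 - p.2) p.2 p.1 := by
  have h1 := T_perm_cyc1 m (fun i j k => Fn j i k)
  exact (T_perm_swap m Fn).trans h1

lemma nested_eq_T (m : ℕ) (f : ℕ → ℕ → γ) :
    ∑ i ∈ Finset.range (m+1), ∑ j ∈ Finset.range (m+1-i), f i j
      = ∑ p ∈ Tset m, f p.1 p.2 := by
  rw [Tset, Finset.sum_filter, Finset.sum_product]
  refine Finset.sum_congr rfl (fun i hi => ?_)
  have : Finset.range (m+1-i) = (Finset.range (m+1)).filter (fun j => i + j ≤ m) := by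
    ext j; simp only [Finset.mem_range, Finset.mem_filter]; omega
  rw [this, Finset.sum_filter]

end MyObstructionAux3
section MyObstructionAux4

variable {F : Type*} [Field F] {L : Type*} [AddCommGroup L] [Module F L]

variable {t : L → L → L → L}

lemma tadd1 (ht : IsTrilin F t) (x x' y z : L) :
    t (x + x') y z = t x y z + t x' y z := (ht.1 y z).map_add x x'
lemma tadd2 (ht : IsTrilin F t) (x y y' z : L) :
    t x (y + y') z = t x y z + t x y' z := (ht.2.1 x z).map_add y y'
lemma tadd3 (ht : IsTrilin F t) (x y z z' : L) :
    t x y (z + z') = t x y z + t x y z' := (ht.2.2 x y).map_add z z'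
lemma tneg1 (ht : IsTrilin F t) (x y z : L) : t (-x) y z = -t x y z := (ht.1 y z).map_neg x
lemma tneg2 (ht : IsTrilin F t) (x y z : L) : t x (-y) z = -t x y z := (ht.2.1 x z).map_neg y
lemma tneg3 (ht : IsTrilin F t) (x y z : L) : t x y (-z) = -t x y z := (ht.2.2 x y).map_neg z
lemma tsub1 (ht : IsTrilin F t) (x x' y z : L) :
    t (x - x') y z = t x y z - t x' y z := by
  rw [sub_eq_add_neg, tadd1 ht, tneg1 ht, ← sub_eq_add_neg]
lemma tsub2 (ht : IsTrilin F t) (x y y' z : L) :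
    t x (y - y') z = t x y z - t x y' z := by
  rw [sub_eq_add_neg, tadd2 ht, tneg2 ht, ← sub_eq_add_neg]
lemma tsub3 (ht : IsTrilin F t) (x y z z' : L) :
    t x y (z - z') = t x y z - t x y z' := by
  rw [sub_eq_add_neg, tadd3 ht, tneg3 ht, ← sub_eq_add_neg]

lemma ladd {h : L → L} (hh : IsLinearMap F h) (x y : L) : h (x + y) = h x + h y :=
  hh.map_add x y
lemma lneg {h : L → L} (hh : IsLinearMap F h) (x : L) : h (-x) = -h x := hh.map_neg x
lemma lsub {h : L → L} (hh : IsLinearMap F h) (x y : L) : h (x - y) = h x - h y := by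
  rw [sub_eq_add_neg, ladd hh, lneg hh, ← sub_eq_add_neg]

lemma core1 [CharZero F] (m : ℕ) (c3 : ℕ → ℕ → ℕ → L)
    (hsym : ∀ i j k, c3 i j k + c3 i k j + c3 j i k + c3 j k i + c3 k i j + c3 k j i = 0) :
    ∑ p ∈ Tset m, c3 p.1 p.2 (m - p.1 - p.2) = 0 := by
  set S := ∑ p ∈ Tset m, c3 p.1 p.2 (m - p.1 - p.2) with hS
  have h1 : ∑ p ∈ Tset m, c3 p.1 (m - p.1 - p.2) p.2 = S := (T_perm_23 m c3).symm
  have h2 : ∑ p ∈ Tset m, c3 p.2 p.1 (m - p.1 - p.2) = S := (T_perm_swap m c3).symm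
  have h3 : ∑ p ∈ Tset m, c3 p.2 (m - p.1 - p.2) p.1 = S := (T_perm_cyc1 m c3).symm
  have h4 : ∑ p ∈ Tset m, c3 (m - p.1 - p.2) p.1 p.2 = S := (T_perm_cyc2 m c3).symm
  have h5 : ∑ p ∈ Tset m, c3 (m - p.1 - p.2) p.2 p.1 = S := (T_perm_13 m c3).symm
  have htot : (∑ p ∈ Tset m, c3 p.1 p.2 (m - p.1 - p.2))
      + (∑ p ∈ Tset m, c3 p.1 (m - p.1 - p.2) p.2)
      + (∑ p ∈ Tset m, c3 p.2 p.1 (m - p.1 - p.2))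
      + (∑ p ∈ Tset m, c3 p.2 (m - p.1 - p.2) p.1)
      + (∑ p ∈ Tset m, c3 (m - p.1 - p.2) p.1 p.2)
      + (∑ p ∈ Tset m, c3 (m - p.1 - p.2) p.2 p.1) = 0 := by
    rw [← Finset.sum_add_distrib, ← Finset.sum_add_distrib, ← Finset.sum_add_distrib,
      ← Finset.sum_add_distrib, ← Finset.sum_add_distrib]
    calc _ = ∑ p ∈ Tset m, (0 : L) :=
          Finset.sum_congr rfl (fun p _ => hsym p.1 p.2 (m - p.1 - p.2))
      _ = 0 := Finset.sum_const_zero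
  rw [h1, h2, h3, h4, h5] at htot
  have h6 : S + S + S + S + S + S = 0 := htot
  have h7 : (6 : F) • S = 0 := by
    rw [show ((6 : F)) = ((6 : ℕ) : F) by norm_num, Nat.cast_smul_eq_nsmul,
      show (6 : ℕ) • S = S + S + S + S + S + S by abel]
    exact h6
  rcases smul_eq_zero.mp h7 with h | h
  · exact absurd h (by norm_num)
  · exact h

lemma sliceT {γ : Type*} [AddCommMonoid γ] (m : ℕ) (c3 : ℕ → ℕ → ℕ → γ) :
    ∑ p ∈ Tset m, c3 p.1 p.2 (m - p.1 - p.2)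
      = ∑ k ∈ Finset.range (m+1), ∑ i ∈ Finset.range (m+1-k), c3 i (m-k-i) k := by
  rw [nested_eq_T m (fun k i => c3 i (m - k - i) k)]
  exact T_perm_cyc1 m c3

lemma regroup3 {γ : Type*} [AddCommMonoid γ] (m : ℕ) (H : ℕ → ℕ → ℕ → γ) :
    ∑ i ∈ Finset.range (m+1), ∑ j ∈ Finset.range (m+1-i), H i j (m-i-j)
      = ∑ k ∈ Finset.range (m+1), ∑ i ∈ Finset.range (m+1-k), H i (m-k-i) k :=
  (nested_eq_T m (fun i j => H i j (m-i-j))).trans (sliceT m H)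

lemma regroup_swap {γ : Type*} [AddCommMonoid γ] (m : ℕ) (H : ℕ → ℕ → γ) :
    ∑ i ∈ Finset.range (m+1), ∑ j ∈ Finset.range (m+1-i), H i j
      = ∑ j ∈ Finset.range (m+1), ∑ i ∈ Finset.range (m+1-j), H i j := by
  rw [nested_eq_T m H, nested_eq_T m (fun j i => H i j)]
  exact T_perm_swap m (fun i j _ => H i j)

end MyObstructionAux4
set_option maxHeartbeats 2000000 in
lemma keyG1 {F : Type*} [Field F] {L : Type*} [AddCommGroup L] [Module F L]
    (a b c : L → L → L → L) (ha : IsTrilin F a) (hb : IsTrilin F b) (hc : IsTrilin F c)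
    (hsa : SkewTri a) (hsb : SkewTri b) (hsc : SkewTri c) (u1 u2 u3 u4 u5 u6 u7 : L) :
    (D2op (Dop a b) c u1 u2 u3 u4 u5 u6 u7 + D2p c (Dop a b) u1 u2 u3 u4 u5 u6 u7)
      + (D2op (Dop a c) b u1 u2 u3 u4 u5 u6 u7 + D2p b (Dop a c) u1 u2 u3 u4 u5 u6 u7)
      + (D2op (Dop b a) c u1 u2 u3 u4 u5 u6 u7 + D2p c (Dop b a) u1 u2 u3 u4 u5 u6 u7)
      + (D2op (Dop b c) a u1 u2 u3 u4 u5 u6 u7 + D2p a (Dop b c) u1 u2 u3 u4 u5 u6 u7)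
      + (D2op (Dop c a) b u1 u2 u3 u4 u5 u6 u7 + D2p b (Dop c a) u1 u2 u3 u4 u5 u6 u7)
      + (D2op (Dop c b) a u1 u2 u3 u4 u5 u6 u7 + D2p a (Dop c b) u1 u2 u3 u4 u5 u6 u7) = 0 := by
  have s12a : ∀ x y z : L, a x y z = -a y x z := hsa.1
  have s23a : ∀ x y z : L, a x y z = -a x z y := hsa.2
  have r1a : ∀ x y z : L, a x y z = a y z x := fun x y z => by
    rw [hsa.1 x y z, hsa.2 y x z, neg_neg]
  have r2a : ∀ x y z : L, a x y z = a z x y := fun x y z => by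
    rw [r1a x y z, r1a y z x]
  have s13a : ∀ x y z : L, a x y z = -a z y x := fun x y z => by
    rw [r1a x y z, hsa.1 y z x]
  have s12b : ∀ x y z : L, b x y z = -b y x z := hsb.1
  have s23b : ∀ x y z : L, b x y z = -b x z y := hsb.2
  have r1b : ∀ x y z : L, b x y z = b y z x := fun x y z => by
    rw [hsb.1 x y z, hsb.2 y x z, neg_neg]
  have r2b : ∀ x y z : L, b x y z = b z x y := fun x y z => by
    rw [r1b x y z, r1b y z x]
  have s13b : ∀ x y z : L, b x y z = -b z y x := fun x y z => by
    rw [r1b x y z, hsb.1 y z x]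
  have s12c : ∀ x y z : L, c x y z = -c y x z := hsc.1
  have s23c : ∀ x y z : L, c x y z = -c x z y := hsc.2
  have r1c : ∀ x y z : L, c x y z = c y z x := fun x y z => by
    rw [hsc.1 x y z, hsc.2 y x z, neg_neg]
  have r2c : ∀ x y z : L, c x y z = c z x y := fun x y z => by
    rw [r1c x y z, r1c y z x]
  have s13c : ∀ x y z : L, c x y z = -c z y x := fun x y z => by
    rw [r1c x y z, hsc.1 y z x]
  have e0 : a (b u1 u2 (c u3 u4 u5)) u6 u7 = a u6 u7 (b u1 u2 (c u3 u4 u5)) := r1a (b u1 u2 (c u3 u4 u5)) u6 u7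
  have e1 : a (b u1 u2 u3) u4 (c u5 u6 u7) = -(a u4 (b u1 u2 u3) (c u5 u6 u7)) := s12a (b u1 u2 u3) u4 (c u5 u6 u7)
  have e2 : a (b u1 u2 u3) u4 u5 = a u4 u5 (b u1 u2 u3) := r1a (b u1 u2 u3) u4 u5
  have e3 : a (b u1 u2 u3) u4 u6 = a u4 u6 (b u1 u2 u3) := r1a (b u1 u2 u3) u4 u6
  have e4 : a (b u1 u2 u3) u4 u7 = a u4 u7 (b u1 u2 u3) := r1a (b u1 u2 u3) u4 u7
  have e5 : a (b u1 u2 u5) (c u3 u4 u6) u7 = a u7 (b u1 u2 u5) (c u3 u4 u6) := r2a (b u1 u2 u5) (c u3 u4 u6) u7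
  have e6 : a (b u1 u2 u5) u6 (c u3 u4 u7) = -(a u6 (b u1 u2 u5) (c u3 u4 u7)) := s12a (b u1 u2 u5) u6 (c u3 u4 u7)
  have e7 : a (b u1 u2 u5) u6 u7 = a u6 u7 (b u1 u2 u5) := r1a (b u1 u2 u5) u6 u7
  have e8 : a (b u3 u4 (c u1 u2 u5)) u6 u7 = a u6 u7 (b u3 u4 (c u1 u2 u5)) := r1a (b u3 u4 (c u1 u2 u5)) u6 u7
  have e9 : a (b u3 u4 u5) (c u1 u2 u6) u7 = a u7 (b u3 u4 u5) (c u1 u2 u6) := r2a (b u3 u4 u5) (c u1 u2 u6) u7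
  have e10 : a (b u3 u4 u5) u6 (c u1 u2 u7) = -(a u6 (b u3 u4 u5) (c u1 u2 u7)) := s12a (b u3 u4 u5) u6 (c u1 u2 u7)
  have e11 : a (b u3 u4 u5) u6 u7 = a u6 u7 (b u3 u4 u5) := r1a (b u3 u4 u5) u6 u7
  have e12 : a (b u3 u5 (c u1 u2 u4)) u6 u7 = a u6 u7 (b u3 u5 (c u1 u2 u4)) := r1a (b u3 u5 (c u1 u2 u4)) u6 u7
  have e13 : a (b u4 u5 (c u1 u2 u3)) u6 u7 = a u6 u7 (b u4 u5 (c u1 u2 u3)) := r1a (b u4 u5 (c u1 u2 u3)) u6 u7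
  have e14 : a (c u1 u2 (b u3 u4 u5)) u6 u7 = a u6 u7 (c u1 u2 (b u3 u4 u5)) := r1a (c u1 u2 (b u3 u4 u5)) u6 u7
  have e15 : a (c u1 u2 u3) u4 (b u5 u6 u7) = a u4 (b u5 u6 u7) (c u1 u2 u3) := r1a (c u1 u2 u3) u4 (b u5 u6 u7)
  have e16 : a (c u1 u2 u3) u4 u5 = a u4 u5 (c u1 u2 u3) := r1a (c u1 u2 u3) u4 u5
  have e17 : a (c u1 u2 u3) u4 u6 = a u4 u6 (c u1 u2 u3) := r1a (c u1 u2 u3) u4 u6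
  have e18 : a (c u1 u2 u3) u4 u7 = a u4 u7 (c u1 u2 u3) := r1a (c u1 u2 u3) u4 u7
  have e19 : a (c u1 u2 u5) (b u3 u4 u6) u7 = -(a u7 (b u3 u4 u6) (c u1 u2 u5)) := s13a (c u1 u2 u5) (b u3 u4 u6) u7
  have e20 : a (c u1 u2 u5) u6 (b u3 u4 u7) = a u6 (b u3 u4 u7) (c u1 u2 u5) := r1a (c u1 u2 u5) u6 (b u3 u4 u7)
  have e21 : a (c u1 u2 u5) u6 u7 = a u6 u7 (c u1 u2 u5) := r1a (c u1 u2 u5) u6 u7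
  have e22 : a (c u3 u4 (b u1 u2 u5)) u6 u7 = a u6 u7 (c u3 u4 (b u1 u2 u5)) := r1a (c u3 u4 (b u1 u2 u5)) u6 u7
  have e23 : a (c u3 u4 u5) (b u1 u2 u6) u7 = -(a u7 (b u1 u2 u6) (c u3 u4 u5)) := s13a (c u3 u4 u5) (b u1 u2 u6) u7
  have e24 : a (c u3 u4 u5) u6 (b u1 u2 u7) = a u6 (b u1 u2 u7) (c u3 u4 u5) := r1a (c u3 u4 u5) u6 (b u1 u2 u7)
  have e25 : a (c u3 u4 u5) u6 u7 = a u6 u7 (c u3 u4 u5) := r1a (c u3 u4 u5) u6 u7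
  have e26 : a (c u3 u5 (b u1 u2 u4)) u6 u7 = a u6 u7 (c u3 u5 (b u1 u2 u4)) := r1a (c u3 u5 (b u1 u2 u4)) u6 u7
  have e27 : a (c u4 u5 (b u1 u2 u3)) u6 u7 = a u6 u7 (c u4 u5 (b u1 u2 u3)) := r1a (c u4 u5 (b u1 u2 u3)) u6 u7
  have e28 : a u3 (b u1 u2 u4) u5 = -(a u3 u5 (b u1 u2 u4)) := s23a u3 (b u1 u2 u4) u5
  have e29 : a u3 (b u1 u2 u4) u6 = -(a u3 u6 (b u1 u2 u4)) := s23a u3 (b u1 u2 u4) u6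
  have e30 : a u3 (b u1 u2 u4) u7 = -(a u3 u7 (b u1 u2 u4)) := s23a u3 (b u1 u2 u4) u7
  have e31 : a u3 (c u1 u2 u4) (b u5 u6 u7) = -(a u3 (b u5 u6 u7) (c u1 u2 u4)) := s23a u3 (c u1 u2 u4) (b u5 u6 u7)
  have e32 : a u3 (c u1 u2 u4) u5 = -(a u3 u5 (c u1 u2 u4)) := s23a u3 (c u1 u2 u4) u5
  have e33 : a u3 (c u1 u2 u4) u6 = -(a u3 u6 (c u1 u2 u4)) := s23a u3 (c u1 u2 u4) u6
  have e34 : a u3 (c u1 u2 u4) u7 = -(a u3 u7 (c u1 u2 u4)) := s23a u3 (c u1 u2 u4) u7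
  have e35 : a u5 (b u1 u2 (c u3 u4 u6)) u7 = -(a u5 u7 (b u1 u2 (c u3 u4 u6))) := s23a u5 (b u1 u2 (c u3 u4 u6)) u7
  have e36 : a u5 (b u1 u2 u6) u7 = -(a u5 u7 (b u1 u2 u6)) := s23a u5 (b u1 u2 u6) u7
  have e37 : a u5 (b u3 u4 (c u1 u2 u6)) u7 = -(a u5 u7 (b u3 u4 (c u1 u2 u6))) := s23a u5 (b u3 u4 (c u1 u2 u6)) u7
  have e38 : a u5 (b u3 u4 u6) u7 = -(a u5 u7 (b u3 u4 u6)) := s23a u5 (b u3 u4 u6) u7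
  have e39 : a u5 (b u3 u6 (c u1 u2 u4)) u7 = -(a u5 u7 (b u3 u6 (c u1 u2 u4))) := s23a u5 (b u3 u6 (c u1 u2 u4)) u7
  have e40 : a u5 (b u4 u6 (c u1 u2 u3)) u7 = -(a u5 u7 (b u4 u6 (c u1 u2 u3))) := s23a u5 (b u4 u6 (c u1 u2 u3)) u7
  have e41 : a u5 (c u1 u2 (b u3 u4 u6)) u7 = -(a u5 u7 (c u1 u2 (b u3 u4 u6))) := s23a u5 (c u1 u2 (b u3 u4 u6)) u7
  have e42 : a u5 (c u1 u2 u6) (b u3 u4 u7) = -(a u5 (b u3 u4 u7) (c u1 u2 u6)) := s23a u5 (c u1 u2 u6) (b u3 u4 u7)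
  have e43 : a u5 (c u1 u2 u6) u7 = -(a u5 u7 (c u1 u2 u6)) := s23a u5 (c u1 u2 u6) u7
  have e44 : a u5 (c u3 u4 (b u1 u2 u6)) u7 = -(a u5 u7 (c u3 u4 (b u1 u2 u6))) := s23a u5 (c u3 u4 (b u1 u2 u6)) u7
  have e45 : a u5 (c u3 u4 u6) (b u1 u2 u7) = -(a u5 (b u1 u2 u7) (c u3 u4 u6)) := s23a u5 (c u3 u4 u6) (b u1 u2 u7)
  have e46 : a u5 (c u3 u4 u6) u7 = -(a u5 u7 (c u3 u4 u6)) := s23a u5 (c u3 u4 u6) u7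
  have e47 : a u5 (c u3 u6 (b u1 u2 u4)) u7 = -(a u5 u7 (c u3 u6 (b u1 u2 u4))) := s23a u5 (c u3 u6 (b u1 u2 u4)) u7
  have e48 : a u5 (c u4 u6 (b u1 u2 u3)) u7 = -(a u5 u7 (c u4 u6 (b u1 u2 u3))) := s23a u5 (c u4 u6 (b u1 u2 u3)) u7
  have e49 : b (a u1 u2 (c u3 u4 u5)) u6 u7 = b u6 u7 (a u1 u2 (c u3 u4 u5)) := r1b (a u1 u2 (c u3 u4 u5)) u6 u7
  have e50 : b (a u1 u2 u3) u4 (c u5 u6 u7) = -(b u4 (a u1 u2 u3) (c u5 u6 u7)) := s12b (a u1 u2 u3) u4 (c u5 u6 u7)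
  have e51 : b (a u1 u2 u3) u4 u5 = b u4 u5 (a u1 u2 u3) := r1b (a u1 u2 u3) u4 u5
  have e52 : b (a u1 u2 u3) u4 u6 = b u4 u6 (a u1 u2 u3) := r1b (a u1 u2 u3) u4 u6
  have e53 : b (a u1 u2 u3) u4 u7 = b u4 u7 (a u1 u2 u3) := r1b (a u1 u2 u3) u4 u7
  have e54 : b (a u1 u2 u5) (c u3 u4 u6) u7 = b u7 (a u1 u2 u5) (c u3 u4 u6) := r2b (a u1 u2 u5) (c u3 u4 u6) u7
  have e55 : b (a u1 u2 u5) u6 (c u3 u4 u7) = -(b u6 (a u1 u2 u5) (c u3 u4 u7)) := s12b (a u1 u2 u5) u6 (c u3 u4 u7)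
  have e56 : b (a u1 u2 u5) u6 u7 = b u6 u7 (a u1 u2 u5) := r1b (a u1 u2 u5) u6 u7
  have e57 : b (a u3 u4 (c u1 u2 u5)) u6 u7 = b u6 u7 (a u3 u4 (c u1 u2 u5)) := r1b (a u3 u4 (c u1 u2 u5)) u6 u7
  have e58 : b (a u3 u4 u5) (c u1 u2 u6) u7 = b u7 (a u3 u4 u5) (c u1 u2 u6) := r2b (a u3 u4 u5) (c u1 u2 u6) u7
  have e59 : b (a u3 u4 u5) u6 (c u1 u2 u7) = -(b u6 (a u3 u4 u5) (c u1 u2 u7)) := s12b (a u3 u4 u5) u6 (c u1 u2 u7)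
  have e60 : b (a u3 u4 u5) u6 u7 = b u6 u7 (a u3 u4 u5) := r1b (a u3 u4 u5) u6 u7
  have e61 : b (a u3 u5 (c u1 u2 u4)) u6 u7 = b u6 u7 (a u3 u5 (c u1 u2 u4)) := r1b (a u3 u5 (c u1 u2 u4)) u6 u7
  have e62 : b (a u4 u5 (c u1 u2 u3)) u6 u7 = b u6 u7 (a u4 u5 (c u1 u2 u3)) := r1b (a u4 u5 (c u1 u2 u3)) u6 u7
  have e63 : b (c u1 u2 (a u3 u4 u5)) u6 u7 = b u6 u7 (c u1 u2 (a u3 u4 u5)) := r1b (c u1 u2 (a u3 u4 u5)) u6 u7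
  have e64 : b (c u1 u2 u3) u4 (a u5 u6 u7) = b u4 (a u5 u6 u7) (c u1 u2 u3) := r1b (c u1 u2 u3) u4 (a u5 u6 u7)
  have e65 : b (c u1 u2 u3) u4 u5 = b u4 u5 (c u1 u2 u3) := r1b (c u1 u2 u3) u4 u5
  have e66 : b (c u1 u2 u3) u4 u6 = b u4 u6 (c u1 u2 u3) := r1b (c u1 u2 u3) u4 u6
  have e67 : b (c u1 u2 u3) u4 u7 = b u4 u7 (c u1 u2 u3) := r1b (c u1 u2 u3) u4 u7
  have e68 : b (c u1 u2 u5) (a u3 u4 u6) u7 = -(b u7 (a u3 u4 u6) (c u1 u2 u5)) := s13b (c u1 u2 u5) (a u3 u4 u6) u7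
  have e69 : b (c u1 u2 u5) u6 (a u3 u4 u7) = b u6 (a u3 u4 u7) (c u1 u2 u5) := r1b (c u1 u2 u5) u6 (a u3 u4 u7)
  have e70 : b (c u1 u2 u5) u6 u7 = b u6 u7 (c u1 u2 u5) := r1b (c u1 u2 u5) u6 u7
  have e71 : b (c u3 u4 (a u1 u2 u5)) u6 u7 = b u6 u7 (c u3 u4 (a u1 u2 u5)) := r1b (c u3 u4 (a u1 u2 u5)) u6 u7
  have e72 : b (c u3 u4 u5) (a u1 u2 u6) u7 = -(b u7 (a u1 u2 u6) (c u3 u4 u5)) := s13b (c u3 u4 u5) (a u1 u2 u6) u7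
  have e73 : b (c u3 u4 u5) u6 (a u1 u2 u7) = b u6 (a u1 u2 u7) (c u3 u4 u5) := r1b (c u3 u4 u5) u6 (a u1 u2 u7)
  have e74 : b (c u3 u4 u5) u6 u7 = b u6 u7 (c u3 u4 u5) := r1b (c u3 u4 u5) u6 u7
  have e75 : b (c u3 u5 (a u1 u2 u4)) u6 u7 = b u6 u7 (c u3 u5 (a u1 u2 u4)) := r1b (c u3 u5 (a u1 u2 u4)) u6 u7
  have e76 : b (c u4 u5 (a u1 u2 u3)) u6 u7 = b u6 u7 (c u4 u5 (a u1 u2 u3)) := r1b (c u4 u5 (a u1 u2 u3)) u6 u7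
  have e77 : b u3 (a u1 u2 u4) u5 = -(b u3 u5 (a u1 u2 u4)) := s23b u3 (a u1 u2 u4) u5
  have e78 : b u3 (a u1 u2 u4) u6 = -(b u3 u6 (a u1 u2 u4)) := s23b u3 (a u1 u2 u4) u6
  have e79 : b u3 (a u1 u2 u4) u7 = -(b u3 u7 (a u1 u2 u4)) := s23b u3 (a u1 u2 u4) u7
  have e80 : b u3 (c u1 u2 u4) (a u5 u6 u7) = -(b u3 (a u5 u6 u7) (c u1 u2 u4)) := s23b u3 (c u1 u2 u4) (a u5 u6 u7)
  have e81 : b u3 (c u1 u2 u4) u5 = -(b u3 u5 (c u1 u2 u4)) := s23b u3 (c u1 u2 u4) u5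
  have e82 : b u3 (c u1 u2 u4) u6 = -(b u3 u6 (c u1 u2 u4)) := s23b u3 (c u1 u2 u4) u6
  have e83 : b u3 (c u1 u2 u4) u7 = -(b u3 u7 (c u1 u2 u4)) := s23b u3 (c u1 u2 u4) u7
  have e84 : b u5 (a u1 u2 (c u3 u4 u6)) u7 = -(b u5 u7 (a u1 u2 (c u3 u4 u6))) := s23b u5 (a u1 u2 (c u3 u4 u6)) u7
  have e85 : b u5 (a u1 u2 u6) u7 = -(b u5 u7 (a u1 u2 u6)) := s23b u5 (a u1 u2 u6) u7
  have e86 : b u5 (a u3 u4 (c u1 u2 u6)) u7 = -(b u5 u7 (a u3 u4 (c u1 u2 u6))) := s23b u5 (a u3 u4 (c u1 u2 u6)) u7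
  have e87 : b u5 (a u3 u4 u6) u7 = -(b u5 u7 (a u3 u4 u6)) := s23b u5 (a u3 u4 u6) u7
  have e88 : b u5 (a u3 u6 (c u1 u2 u4)) u7 = -(b u5 u7 (a u3 u6 (c u1 u2 u4))) := s23b u5 (a u3 u6 (c u1 u2 u4)) u7
  have e89 : b u5 (a u4 u6 (c u1 u2 u3)) u7 = -(b u5 u7 (a u4 u6 (c u1 u2 u3))) := s23b u5 (a u4 u6 (c u1 u2 u3)) u7
  have e90 : b u5 (c u1 u2 (a u3 u4 u6)) u7 = -(b u5 u7 (c u1 u2 (a u3 u4 u6))) := s23b u5 (c u1 u2 (a u3 u4 u6)) u7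
  have e91 : b u5 (c u1 u2 u6) (a u3 u4 u7) = -(b u5 (a u3 u4 u7) (c u1 u2 u6)) := s23b u5 (c u1 u2 u6) (a u3 u4 u7)
  have e92 : b u5 (c u1 u2 u6) u7 = -(b u5 u7 (c u1 u2 u6)) := s23b u5 (c u1 u2 u6) u7
  have e93 : b u5 (c u3 u4 (a u1 u2 u6)) u7 = -(b u5 u7 (c u3 u4 (a u1 u2 u6))) := s23b u5 (c u3 u4 (a u1 u2 u6)) u7
  have e94 : b u5 (c u3 u4 u6) (a u1 u2 u7) = -(b u5 (a u1 u2 u7) (c u3 u4 u6)) := s23b u5 (c u3 u4 u6) (a u1 u2 u7)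
  have e95 : b u5 (c u3 u4 u6) u7 = -(b u5 u7 (c u3 u4 u6)) := s23b u5 (c u3 u4 u6) u7
  have e96 : b u5 (c u3 u6 (a u1 u2 u4)) u7 = -(b u5 u7 (c u3 u6 (a u1 u2 u4))) := s23b u5 (c u3 u6 (a u1 u2 u4)) u7
  have e97 : b u5 (c u4 u6 (a u1 u2 u3)) u7 = -(b u5 u7 (c u4 u6 (a u1 u2 u3))) := s23b u5 (c u4 u6 (a u1 u2 u3)) u7
  have e98 : c (a u1 u2 (b u3 u4 u5)) u6 u7 = c u6 u7 (a u1 u2 (b u3 u4 u5)) := r1c (a u1 u2 (b u3 u4 u5)) u6 u7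
  have e99 : c (a u1 u2 u3) u4 (b u5 u6 u7) = -(c u4 (a u1 u2 u3) (b u5 u6 u7)) := s12c (a u1 u2 u3) u4 (b u5 u6 u7)
  have e100 : c (a u1 u2 u3) u4 u5 = c u4 u5 (a u1 u2 u3) := r1c (a u1 u2 u3) u4 u5
  have e101 : c (a u1 u2 u3) u4 u6 = c u4 u6 (a u1 u2 u3) := r1c (a u1 u2 u3) u4 u6
  have e102 : c (a u1 u2 u3) u4 u7 = c u4 u7 (a u1 u2 u3) := r1c (a u1 u2 u3) u4 u7
  have e103 : c (a u1 u2 u5) (b u3 u4 u6) u7 = c u7 (a u1 u2 u5) (b u3 u4 u6) := r2c (a u1 u2 u5) (b u3 u4 u6) u7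
  have e104 : c (a u1 u2 u5) u6 (b u3 u4 u7) = -(c u6 (a u1 u2 u5) (b u3 u4 u7)) := s12c (a u1 u2 u5) u6 (b u3 u4 u7)
  have e105 : c (a u1 u2 u5) u6 u7 = c u6 u7 (a u1 u2 u5) := r1c (a u1 u2 u5) u6 u7
  have e106 : c (a u3 u4 (b u1 u2 u5)) u6 u7 = c u6 u7 (a u3 u4 (b u1 u2 u5)) := r1c (a u3 u4 (b u1 u2 u5)) u6 u7
  have e107 : c (a u3 u4 u5) (b u1 u2 u6) u7 = c u7 (a u3 u4 u5) (b u1 u2 u6) := r2c (a u3 u4 u5) (b u1 u2 u6) u7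
  have e108 : c (a u3 u4 u5) u6 (b u1 u2 u7) = -(c u6 (a u3 u4 u5) (b u1 u2 u7)) := s12c (a u3 u4 u5) u6 (b u1 u2 u7)
  have e109 : c (a u3 u4 u5) u6 u7 = c u6 u7 (a u3 u4 u5) := r1c (a u3 u4 u5) u6 u7
  have e110 : c (a u3 u5 (b u1 u2 u4)) u6 u7 = c u6 u7 (a u3 u5 (b u1 u2 u4)) := r1c (a u3 u5 (b u1 u2 u4)) u6 u7
  have e111 : c (a u4 u5 (b u1 u2 u3)) u6 u7 = c u6 u7 (a u4 u5 (b u1 u2 u3)) := r1c (a u4 u5 (b u1 u2 u3)) u6 u7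
  have e112 : c (b u1 u2 (a u3 u4 u5)) u6 u7 = c u6 u7 (b u1 u2 (a u3 u4 u5)) := r1c (b u1 u2 (a u3 u4 u5)) u6 u7
  have e113 : c (b u1 u2 u3) u4 (a u5 u6 u7) = c u4 (a u5 u6 u7) (b u1 u2 u3) := r1c (b u1 u2 u3) u4 (a u5 u6 u7)
  have e114 : c (b u1 u2 u3) u4 u5 = c u4 u5 (b u1 u2 u3) := r1c (b u1 u2 u3) u4 u5
  have e115 : c (b u1 u2 u3) u4 u6 = c u4 u6 (b u1 u2 u3) := r1c (b u1 u2 u3) u4 u6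
  have e116 : c (b u1 u2 u3) u4 u7 = c u4 u7 (b u1 u2 u3) := r1c (b u1 u2 u3) u4 u7
  have e117 : c (b u1 u2 u5) (a u3 u4 u6) u7 = -(c u7 (a u3 u4 u6) (b u1 u2 u5)) := s13c (b u1 u2 u5) (a u3 u4 u6) u7
  have e118 : c (b u1 u2 u5) u6 (a u3 u4 u7) = c u6 (a u3 u4 u7) (b u1 u2 u5) := r1c (b u1 u2 u5) u6 (a u3 u4 u7)
  have e119 : c (b u1 u2 u5) u6 u7 = c u6 u7 (b u1 u2 u5) := r1c (b u1 u2 u5) u6 u7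
  have e120 : c (b u3 u4 (a u1 u2 u5)) u6 u7 = c u6 u7 (b u3 u4 (a u1 u2 u5)) := r1c (b u3 u4 (a u1 u2 u5)) u6 u7
  have e121 : c (b u3 u4 u5) (a u1 u2 u6) u7 = -(c u7 (a u1 u2 u6) (b u3 u4 u5)) := s13c (b u3 u4 u5) (a u1 u2 u6) u7
  have e122 : c (b u3 u4 u5) u6 (a u1 u2 u7) = c u6 (a u1 u2 u7) (b u3 u4 u5) := r1c (b u3 u4 u5) u6 (a u1 u2 u7)
  have e123 : c (b u3 u4 u5) u6 u7 = c u6 u7 (b u3 u4 u5) := r1c (b u3 u4 u5) u6 u7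
  have e124 : c (b u3 u5 (a u1 u2 u4)) u6 u7 = c u6 u7 (b u3 u5 (a u1 u2 u4)) := r1c (b u3 u5 (a u1 u2 u4)) u6 u7
  have e125 : c (b u4 u5 (a u1 u2 u3)) u6 u7 = c u6 u7 (b u4 u5 (a u1 u2 u3)) := r1c (b u4 u5 (a u1 u2 u3)) u6 u7
  have e126 : c u3 (a u1 u2 u4) u5 = -(c u3 u5 (a u1 u2 u4)) := s23c u3 (a u1 u2 u4) u5
  have e127 : c u3 (a u1 u2 u4) u6 = -(c u3 u6 (a u1 u2 u4)) := s23c u3 (a u1 u2 u4) u6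
  have e128 : c u3 (a u1 u2 u4) u7 = -(c u3 u7 (a u1 u2 u4)) := s23c u3 (a u1 u2 u4) u7
  have e129 : c u3 (b u1 u2 u4) (a u5 u6 u7) = -(c u3 (a u5 u6 u7) (b u1 u2 u4)) := s23c u3 (b u1 u2 u4) (a u5 u6 u7)
  have e130 : c u3 (b u1 u2 u4) u5 = -(c u3 u5 (b u1 u2 u4)) := s23c u3 (b u1 u2 u4) u5
  have e131 : c u3 (b u1 u2 u4) u6 = -(c u3 u6 (b u1 u2 u4)) := s23c u3 (b u1 u2 u4) u6
  have e132 : c u3 (b u1 u2 u4) u7 = -(c u3 u7 (b u1 u2 u4)) := s23c u3 (b u1 u2 u4) u7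
  have e133 : c u5 (a u1 u2 (b u3 u4 u6)) u7 = -(c u5 u7 (a u1 u2 (b u3 u4 u6))) := s23c u5 (a u1 u2 (b u3 u4 u6)) u7
  have e134 : c u5 (a u1 u2 u6) u7 = -(c u5 u7 (a u1 u2 u6)) := s23c u5 (a u1 u2 u6) u7
  have e135 : c u5 (a u3 u4 (b u1 u2 u6)) u7 = -(c u5 u7 (a u3 u4 (b u1 u2 u6))) := s23c u5 (a u3 u4 (b u1 u2 u6)) u7
  have e136 : c u5 (a u3 u4 u6) u7 = -(c u5 u7 (a u3 u4 u6)) := s23c u5 (a u3 u4 u6) u7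
  have e137 : c u5 (a u3 u6 (b u1 u2 u4)) u7 = -(c u5 u7 (a u3 u6 (b u1 u2 u4))) := s23c u5 (a u3 u6 (b u1 u2 u4)) u7
  have e138 : c u5 (a u4 u6 (b u1 u2 u3)) u7 = -(c u5 u7 (a u4 u6 (b u1 u2 u3))) := s23c u5 (a u4 u6 (b u1 u2 u3)) u7
  have e139 : c u5 (b u1 u2 (a u3 u4 u6)) u7 = -(c u5 u7 (b u1 u2 (a u3 u4 u6))) := s23c u5 (b u1 u2 (a u3 u4 u6)) u7
  have e140 : c u5 (b u1 u2 u6) (a u3 u4 u7) = -(c u5 (a u3 u4 u7) (b u1 u2 u6)) := s23c u5 (b u1 u2 u6) (a u3 u4 u7)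
  have e141 : c u5 (b u1 u2 u6) u7 = -(c u5 u7 (b u1 u2 u6)) := s23c u5 (b u1 u2 u6) u7
  have e142 : c u5 (b u3 u4 (a u1 u2 u6)) u7 = -(c u5 u7 (b u3 u4 (a u1 u2 u6))) := s23c u5 (b u3 u4 (a u1 u2 u6)) u7
  have e143 : c u5 (b u3 u4 u6) (a u1 u2 u7) = -(c u5 (a u1 u2 u7) (b u3 u4 u6)) := s23c u5 (b u3 u4 u6) (a u1 u2 u7)
  have e144 : c u5 (b u3 u4 u6) u7 = -(c u5 u7 (b u3 u4 u6)) := s23c u5 (b u3 u4 u6) u7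
  have e145 : c u5 (b u3 u6 (a u1 u2 u4)) u7 = -(c u5 u7 (b u3 u6 (a u1 u2 u4))) := s23c u5 (b u3 u6 (a u1 u2 u4)) u7
  have e146 : c u5 (b u4 u6 (a u1 u2 u3)) u7 = -(c u5 u7 (b u4 u6 (a u1 u2 u3))) := s23c u5 (b u4 u6 (a u1 u2 u3)) u7
  simp only [D2op, D2p, Dop]
  simp only [tadd3 ha, tsub3 ha, tadd3 hb, tsub3 hb, tadd3 hc, tsub3 hc]
  simp only [e0, e1, e2, e3, e4, e5, e6, e7, e8, e9, e10, e11, e12, e13, e14, e15, e16, e17, e18, e19, e20, e21, e22, e23, e24, e25, e26, e27, e28, e29, e30, e31, e32, e33, e34, e35, e36, e37, e38, e39, e40, e41, e42, e43, e44, e45, e46, e47, e48, e49, e50, e51, e52, e53, e54, e55, e56, e57, e58, e59, e60, e61, e62, e63, e64, e65, e66, e67, e68, e69, e70, e71, e72, e73, e74, e75, e76, e77, e78, e79, e80, e81, e82, e83, e84, e85, e86, e87, e88, e89, e90, e91, e92, e93, e94, e95, e96, e97, e98, e99, e100, e101, e102, e103, e104, e105, e106, e107, e108, e109, e110, e111,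 e112, e113, e114, e115, e116, e117, e118, e119, e120, e121, e122, e123, e124, e125, e126, e127, e128, e129, e130, e131, e132, e133, e134, e135, e136, e137, e138, e139, e140, e141, e142, e143, e144, e145, e146,
    tneg1 ha, tneg2 ha, tneg3 ha, tneg1 hb, tneg2 hb, tneg3 hb,
    tneg1 hc, tneg2 hc, tneg3 hc, neg_neg]
  abel

set_option maxHeartbeats 2000000 in
lemma keyG2 {F : Type*} [Field F] {L : Type*} [AddCommGroup L] [Module F L]
    (h : L → L) (a b : L → L → L → L) (hh : IsLinearMap F h)
    (ha : IsTrilin F a) (hb : IsTrilin F b) (hsa : SkewTri a) (hsb : SkewTri b)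
    (u1 u2 u3 u4 u5 : L) :
    Phi2op h (Dop a b) u1 u2 u3 u4 u5
      = Dop (Phiop h a) b u1 u2 u3 u4 u5 + Dop a (Phiop h b) u1 u2 u3 u4 u5 := by
  have s12a : ∀ x y z : L, a x y z = -a y x z := hsa.1
  have s23a : ∀ x y z : L, a x y z = -a x z y := hsa.2
  have r1a : ∀ x y z : L, a x y z = a y z x := fun x y z => by
    rw [hsa.1 x y z, hsa.2 y x z, neg_neg]
  have r2a : ∀ x y z : L, a x y z = a z x y := fun x y z => by
    rw [r1a x y z, r1a y z x]
  have s13a : ∀ x y z : L, a x y z = -a z y x := fun x y z => by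
    rw [r1a x y z, hsa.1 y z x]
  have s12b : ∀ x y z : L, b x y z = -b y x z := hsb.1
  have s23b : ∀ x y z : L, b x y z = -b x z y := hsb.2
  have r1b : ∀ x y z : L, b x y z = b y z x := fun x y z => by
    rw [hsb.1 x y z, hsb.2 y x z, neg_neg]
  have r2b : ∀ x y z : L, b x y z = b z x y := fun x y z => by
    rw [r1b x y z, r1b y z x]
  have s13b : ∀ x y z : L, b x y z = -b z y x := fun x y z => by
    rw [r1b x y z, hsb.1 y z x]
  have q0 : a (b u1 u2 (h u3)) u4 u5 = a u4 u5 (b u1 u2 (h u3)) := r1a (b u1 u2 (h u3)) u4 u5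
  have q1 : a (b u1 u2 u3) (h u4) u5 = a u5 (b u1 u2 u3) (h u4) := r2a (b u1 u2 u3) (h u4) u5
  have q2 : a (b u1 u2 u3) u4 (h u5) = -(a u4 (b u1 u2 u3) (h u5)) := s12a (b u1 u2 u3) u4 (h u5)
  have q3 : a (b u1 u2 u3) u4 u5 = a u4 u5 (b u1 u2 u3) := r1a (b u1 u2 u3) u4 u5
  have q4 : a (b u1 u3 (h u2)) u4 u5 = a u4 u5 (b u1 u3 (h u2)) := r1a (b u1 u3 (h u2)) u4 u5
  have q5 : a (b u2 u3 (h u1)) u4 u5 = a u4 u5 (b u2 u3 (h u1)) := r1a (b u2 u3 (h u1)) u4 u5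
  have q6 : a (h (b u1 u2 u3)) u4 u5 = a u4 u5 (h (b u1 u2 u3)) := r1a (h (b u1 u2 u3)) u4 u5
  have q7 : a (h u1) u2 (b u3 u4 u5) = a u2 (b u3 u4 u5) (h u1) := r1a (h u1) u2 (b u3 u4 u5)
  have q8 : a (h u3) (b u1 u2 u4) u5 = -(a u5 (b u1 u2 u4) (h u3)) := s13a (h u3) (b u1 u2 u4) u5
  have q9 : a (h u3) u4 (b u1 u2 u5) = a u4 (b u1 u2 u5) (h u3) := r1a (h u3) u4 (b u1 u2 u5)
  have q10 : a u1 (h u2) (b u3 u4 u5) = -(a u1 (b u3 u4 u5) (h u2)) := s23a u1 (h u2) (b u3 u4 u5)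
  have q11 : a u3 (b u1 u2 (h u4)) u5 = -(a u3 u5 (b u1 u2 (h u4))) := s23a u3 (b u1 u2 (h u4)) u5
  have q12 : a u3 (b u1 u2 u4) u5 = -(a u3 u5 (b u1 u2 u4)) := s23a u3 (b u1 u2 u4) u5
  have q13 : a u3 (b u1 u4 (h u2)) u5 = -(a u3 u5 (b u1 u4 (h u2))) := s23a u3 (b u1 u4 (h u2)) u5
  have q14 : a u3 (b u2 u4 (h u1)) u5 = -(a u3 u5 (b u2 u4 (h u1))) := s23a u3 (b u2 u4 (h u1)) u5
  have q15 : a u3 (h (b u1 u2 u4)) u5 = -(a u3 u5 (h (b u1 u2 u4))) := s23a u3 (h (b u1 u2 u4)) u5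
  have q16 : a u3 (h u4) (b u1 u2 u5) = -(a u3 (b u1 u2 u5) (h u4)) := s23a u3 (h u4) (b u1 u2 u5)
  have q17 : b (h u1) u2 u3 = b u2 u3 (h u1) := r1b (h u1) u2 u3
  have q18 : b (h u1) u2 u4 = b u2 u4 (h u1) := r1b (h u1) u2 u4
  have q19 : b (h u1) u2 u5 = b u2 u5 (h u1) := r1b (h u1) u2 u5
  have q20 : b (h u3) u4 u5 = b u4 u5 (h u3) := r1b (h u3) u4 u5
  have q21 : b u1 (h u2) u3 = -(b u1 u3 (h u2)) := s23b u1 (h u2) u3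
  have q22 : b u1 (h u2) u4 = -(b u1 u4 (h u2)) := s23b u1 (h u2) u4
  have q23 : b u1 (h u2) u5 = -(b u1 u5 (h u2)) := s23b u1 (h u2) u5
  have q24 : b u3 (h u4) u5 = -(b u3 u5 (h u4)) := s23b u3 (h u4) u5
  simp only [Phi2op, Phiop, D2op, D2p, Dop]
  simp only [ladd hh, lsub hh, tadd1 ha, tsub1 ha, tadd2 ha, tsub2 ha, tadd3 ha, tsub3 ha,
    tadd1 hb, tsub1 hb, tadd2 hb, tsub2 hb, tadd3 hb, tsub3 hb]
  simp only [q0, q1, q2, q3, q4, q5, q6, q7, q8, q9, q10, q11, q12, q13, q14, q15, q16, q17, q18, q19, q20, q21, q22, q23, q24,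
    lneg hh, tneg1 ha, tneg2 ha, tneg3 ha, tneg1 hb, tneg2 hb, tneg3 hb, neg_neg]
  abel
set_option maxHeartbeats 1000000 in
/-- Let `(f_t, g_t)` be a deformation of order `n` of the 3-LieDer
pair `(L, bracket, θ)`.  Then the obstruction 3-cochain `(Ω³_{n+1}, Ω²_{n+1})` is
closed: `∂(Ω³_{n+1}, Ω²_{n+1}) = (dΩ³_{n+1}, dΩ²_{n+1} - δΩ³_{n+1}) = 0`, i.e. it
belongs to `Z³_{3-LieDer}(L;L)`. -/
theorem statement13 {F L : Type*} [Field F] [CharZero F]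
    [AddCommGroup L] [Module F L] [FiniteDimensional F L]
    (bracket : L → L → L → L) (hb3 : IsTrilin F bracket) (hbskew : SkewTri bracket)
    (hbFI : FundId bracket)
    (θ : L → L) (hθlin : IsLinearMap F θ) (hθ : IsDeriv3 bracket θ)
    (n : ℕ) (f : ℕ → L → L → L → L) (g : ℕ → L → L)
    (hdef : IsOrderNDeformation F bracket θ n f g) :
    d3c bracket bracket (Omega3 f n) = 0 ∧
    d2c bracket bracket (Omega2 f g n) - delta3c θ θ (Omega3 f n) = 0 := by
  obtain ⟨hf0, hg0, htri, hskewF, hglin, hfbig, hgbig, hFI, hDer⟩ := hdef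
  have hfz : ∀ x y z : L, f (n+1) x y z = 0 := by
    intro x y z; rw [hfbig (n+1) (by omega)]; rfl
  have hgz : ∀ x : L, g (n+1) x = 0 := by
    intro x; rw [hgbig (n+1) (by omega)]; rfl
  constructor
  · -- Part 1 : dΩ³ = 0
    funext a1 b1 a2 b2 a3 b3 zz
    simp only [Pi.zero_apply]
    rw [show Omega3 f n = (fun x1 x2 x3 x4 x5 => ∑ i ∈ Finset.Ioo 0 (n+1),
        Dop (f i) (f (n+1-i)) x1 x2 x3 x4 x5) from rfl]
    rw [sum_d3c hb3]
    have step : ∑ i ∈ Finset.Ioo 0 (n+1),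
        d3c bracket bracket (Dop (f i) (f (n+1-i))) a1 b1 a2 b2 a3 b3 zz
        = ∑ i ∈ Finset.Ioo 0 (n+1),
          (-(D2op (Dop (f i) (f (n+1-i))) bracket a1 b1 a2 b2 a3 b3 zz
            + D2p bracket (Dop (f i) (f (n+1-i))) a1 b1 a2 b2 a3 b3 zz)) :=
      Finset.sum_congr rfl (fun i _ => by rw [key_d3c]; abel)
    rw [step, Finset.sum_neg_distrib, neg_eq_zero, ← hf0]
    have hext : ∑ i ∈ Finset.Ioo 0 (n+1),
        (D2op (Dop (f i) (f (n+1-i))) (f 0) a1 b1 a2 b2 a3 b3 zz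
          + D2p (f 0) (Dop (f i) (f (n+1-i))) a1 b1 a2 b2 a3 b3 zz)
        = ∑ i ∈ Finset.range (n+1+1),
        (D2op (Dop (f i) (f (n+1-i))) (f 0) a1 b1 a2 b2 a3 b3 zz
          + D2p (f 0) (Dop (f i) (f (n+1-i))) a1 b1 a2 b2 a3 b3 zz) := by
      apply Finset.sum_subset
      · intro x hx
        simp only [Finset.mem_Ioo] at hx; simp only [Finset.mem_range]; omega
      · intro x hx hnx
        simp only [Finset.mem_range] at hx; simp only [Finset.mem_Ioo] at hnx
        have hx0 : x = 0 ∨ x = n+1 := by omega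
        rcases hx0 with h | h <;> subst h
        · simp only [Nat.sub_zero]
          rw [D2op_zero_alpha
              (fun p1 p2 p3 p4 p5 => Dop_zero_right (htri 0) hfz p1 p2 p3 p4 p5),
            D2p_zero_alpha (htri 0)
              (fun p1 p2 p3 p4 p5 => Dop_zero_right (htri 0) hfz p1 p2 p3 p4 p5), add_zero]
        · rw [D2op_zero_alpha
              (fun p1 p2 p3 p4 p5 => Dop_zero_left hfz (f (n+1-(n+1))) p1 p2 p3 p4 p5),
            D2p_zero_alpha (htri 0)
              (fun p1 p2 p3 p4 p5 => Dop_zero_left hfz (f (n+1-(n+1))) p1 p2 p3 p4 p5), add_zero]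
    rw [hext]
    have hmaster : ∑ k ∈ Finset.range (n+1+1), ∑ i ∈ Finset.range (n+1+1-k),
        (D2op (Dop (f i) (f (n+1-k-i))) (f k) a1 b1 a2 b2 a3 b3 zz
          + D2p (f k) (Dop (f i) (f (n+1-k-i))) a1 b1 a2 b2 a3 b3 zz) = 0 := by
      rw [← sliceT (n+1) (fun x y z => D2op (Dop (f x) (f y)) (f z) a1 b1 a2 b2 a3 b3 zz
        + D2p (f z) (Dop (f x) (f y)) a1 b1 a2 b2 a3 b3 zz)]
      exact core1 (F := F) (n+1) _ (fun i j k => keyG1 (f i) (f j) (f k)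
        (htri i) (htri j) (htri k) (hskewF i) (hskewF j) (hskewF k) a1 b1 a2 b2 a3 b3 zz)
    rw [Finset.sum_range_succ'] at hmaster
    have hz1 : ∀ k ∈ Finset.range (n+1), (∑ i ∈ Finset.range (n+1+1-(k+1)),
        (D2op (Dop (f i) (f (n+1-(k+1)-i))) (f (k+1)) a1 b1 a2 b2 a3 b3 zz
          + D2p (f (k+1)) (Dop (f i) (f (n+1-(k+1)-i))) a1 b1 a2 b2 a3 b3 zz)) = 0 := by
      intro k hk
      have hk' : k < n+1 := Finset.mem_range.mp hk
      have hN : n+1+1-(k+1) = (n-k)+1 := by omega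
      have hN2 : ∀ i : ℕ, n+1-(k+1)-i = (n-k)-i := fun i => by omega
      rw [hN]; simp only [hN2]
      have hzfun : ∀ p1 p2 p3 p4 p5 : L,
          ∑ i ∈ Finset.range ((n-k)+1), Dop (f i) (f ((n-k)-i)) p1 p2 p3 p4 p5 = 0 :=
        fun p1 p2 p3 p4 p5 => hFI (n-k) (by omega) p1 p2 p3 p4 p5
      rw [Finset.sum_add_distrib, D2op_sum_alpha,
        D2op_zero_alpha hzfun (f (k+1)) a1 b1 a2 b2 a3 b3 zz,
        D2p_sum_alpha (htri (k+1)),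
        D2p_zero_alpha (htri (k+1)) hzfun a1 b1 a2 b2 a3 b3 zz, add_zero]
    rw [Finset.sum_eq_zero hz1, zero_add] at hmaster
    simp only [Nat.sub_zero] at hmaster
    exact hmaster
  · -- Part 2
    funext x1 x2 x3 x4 x5
    simp only [Pi.sub_apply, Pi.zero_apply]
    rw [show Omega2 f g n = (fun p1 p2 p3 => ∑ i ∈ Finset.Ioo 0 (n+1),
        Phiop (g i) (f (n+1-i)) p1 p2 p3) from rfl]
    rw [sum_d2c hb3]
    rw [show Omega3 f n = (fun p1 p2 p3 p4 p5 => ∑ i ∈ Finset.Ioo 0 (n+1),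
        Dop (f i) (f (n+1-i)) p1 p2 p3 p4 p5) from rfl]
    rw [sum_delta3c hθlin]
    have hA : ∑ i ∈ Finset.Ioo 0 (n+1),
        d2c bracket bracket (Phiop (g i) (f (n+1-i))) x1 x2 x3 x4 x5
        = -(∑ i ∈ Finset.Ioo 0 (n+1),
          (Dop (Phiop (g i) (f (n+1-i))) bracket x1 x2 x3 x4 x5
            + Dop bracket (Phiop (g i) (f (n+1-i))) x1 x2 x3 x4 x5)) := by
      rw [← Finset.sum_neg_distrib]
      refine Finset.sum_congr rfl (fun i _ => ?_)
      rw [key_d2c hbskew]; abel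
    have hB : ∑ i ∈ Finset.Ioo 0 (n+1),
        delta3c θ θ (Dop (f i) (f (n+1-i))) x1 x2 x3 x4 x5
        = -(∑ i ∈ Finset.Ioo 0 (n+1),
          Phi2op θ (Dop (f i) (f (n+1-i))) x1 x2 x3 x4 x5) := by
      rw [← Finset.sum_neg_distrib]
      exact Finset.sum_congr rfl (fun i _ => key_delta3 θ _ x1 x2 x3 x4 x5)
    rw [hA, hB]
    -- shared boundary facts
    have hsub : Finset.Ioo 0 (n+1) ⊆ Finset.range (n+1+1) := by
      intro x hx
      simp only [Finset.mem_Ioo] at hx; simp only [Finset.mem_range]; omega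
    have hvan : ∀ x y z : L, ∀ i ∈ Finset.range (n+1+1), i ∉ Finset.Ioo 0 (n+1) →
        Phiop (g i) (f (n+1-i)) x y z = 0 := by
      intro x y z i hi hni
      simp only [Finset.mem_range] at hi; simp only [Finset.mem_Ioo] at hni
      have hx0 : i = 0 ∨ i = n+1 := by omega
      rcases hx0 with h | h <;> subst h
      · simp [Phiop, hfz, lzero (hglin 0)]
      · rw [show n+1-(n+1) = 0 by omega]
        simp [Phiop, hgz, tzero1 (htri 0), tzero2 (htri 0), tzero3 (htri 0)]
    have hOm2fun : (fun x y z => ∑ i ∈ Finset.range (n+1+1),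
        Phiop (g i) (f (n+1-i)) x y z) = Omega2 f g n := by
      funext x y z
      exact (Finset.sum_subset hsub (fun i hi hni => hvan x y z i hi hni)).symm
    have hkey : ∑ i ∈ Finset.Ioo 0 (n+1), Phi2op θ (Dop (f i) (f (n+1-i))) x1 x2 x3 x4 x5
        = ∑ i ∈ Finset.Ioo 0 (n+1),
          (Dop (Phiop (g i) (f (n+1-i))) bracket x1 x2 x3 x4 x5
            + Dop bracket (Phiop (g i) (f (n+1-i))) x1 x2 x3 x4 x5) := by
      -- extend LHS to full range
      have hLP : ∑ i ∈ Finset.Ioo 0 (n+1), Phi2op θ (Dop (f i) (f (n+1-i))) x1 x2 x3 x4 x5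
          = ∑ i ∈ Finset.range (n+1+1), Phi2op θ (Dop (f i) (f (n+1-i))) x1 x2 x3 x4 x5 := by
        apply Finset.sum_subset hsub
        intro i hi hni
        simp only [Finset.mem_range] at hi; simp only [Finset.mem_Ioo] at hni
        have hx0 : i = 0 ∨ i = n+1 := by omega
        rcases hx0 with h | h <;> subst h
        · exact Phi2_zero_alpha hθlin
            (fun p1 p2 p3 p4 p5 => Dop_zero_right (htri 0) hfz p1 p2 p3 p4 p5) x1 x2 x3 x4 x5
        · exact Phi2_zero_alpha hθlin
            (fun p1 p2 p3 p4 p5 => Dop_zero_left hfz (f (n+1-(n+1))) p1 p2 p3 p4 p5) x1 x2 x3 x4 x5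
      -- the master double sum
      have hV : ∑ i ∈ Finset.range (n+1+1), ∑ j ∈ Finset.range (n+1+1-i),
          Phi2op (g i) (Dop (f j) (f (n+1-i-j))) x1 x2 x3 x4 x5
          = ∑ i ∈ Finset.range (n+1+1), Phi2op θ (Dop (f i) (f (n+1-i))) x1 x2 x3 x4 x5 := by
        rw [Finset.sum_range_succ']
        have hz2 : ∀ i ∈ Finset.range (n+1), (∑ j ∈ Finset.range (n+1+1-(i+1)),
            Phi2op (g (i+1)) (Dop (f j) (f (n+1-(i+1)-j))) x1 x2 x3 x4 x5) = 0 := by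
          intro i hi
          have hi' : i < n+1 := Finset.mem_range.mp hi
          have hN : n+1+1-(i+1) = (n-i)+1 := by omega
          have hN2 : ∀ j : ℕ, n+1-(i+1)-j = (n-i)-j := fun j => by omega
          rw [hN]; simp only [hN2]
          rw [Phi2_sum_alpha (hglin (i+1))]
          exact Phi2_zero_alpha (hglin (i+1))
            (fun p1 p2 p3 p4 p5 => hFI (n-i) (by omega) p1 p2 p3 p4 p5) x1 x2 x3 x4 x5
        rw [Finset.sum_eq_zero hz2, zero_add, hg0]
        simp only [Nat.sub_zero]
      have hG2 : ∑ i ∈ Finset.range (n+1+1), ∑ j ∈ Finset.range (n+1+1-i),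
          Phi2op (g i) (Dop (f j) (f (n+1-i-j))) x1 x2 x3 x4 x5
          = ∑ i ∈ Finset.range (n+1+1), ∑ j ∈ Finset.range (n+1+1-i),
            (Dop (Phiop (g i) (f j)) (f (n+1-i-j)) x1 x2 x3 x4 x5
              + Dop (f j) (Phiop (g i) (f (n+1-i-j))) x1 x2 x3 x4 x5) :=
        Finset.sum_congr rfl (fun i _ => Finset.sum_congr rfl (fun j _ =>
          keyG2 (g i) (f j) (f (n+1-i-j)) (hglin i) (htri j) (htri (n+1-i-j))
            (hskewF j) (hskewF (n+1-i-j)) x1 x2 x3 x4 x5))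
      have hX : ∑ i ∈ Finset.range (n+1+1), ∑ j ∈ Finset.range (n+1+1-i),
          Dop (Phiop (g i) (f j)) (f (n+1-i-j)) x1 x2 x3 x4 x5
          = Dop (Omega2 f g n) bracket x1 x2 x3 x4 x5 := by
        rw [regroup3 (n+1) (fun i j k => Dop (Phiop (g i) (f j)) (f k) x1 x2 x3 x4 x5)]
        rw [Finset.sum_range_succ']
        have hz3 : ∀ k ∈ Finset.range (n+1), (∑ i ∈ Finset.range (n+1+1-(k+1)),
            Dop (Phiop (g i) (f (n+1-(k+1)-i))) (f (k+1)) x1 x2 x3 x4 x5) = 0 := by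
          intro k hk
          have hk' : k < n+1 := Finset.mem_range.mp hk
          have hN : n+1+1-(k+1) = (n-k)+1 := by omega
          have hN2 : ∀ i : ℕ, n+1-(k+1)-i = (n-k)-i := fun i => by omega
          rw [hN]; simp only [hN2]
          rw [Dop_sum_left]
          exact Dop_zero_left (fun x y z => hDer (n-k) (by omega) x y z)
            (f (k+1)) x1 x2 x3 x4 x5
        rw [Finset.sum_eq_zero hz3, zero_add]
        simp only [Nat.sub_zero]
        rw [Dop_sum_left, hf0, hOm2fun]
      have hY : ∑ i ∈ Finset.range (n+1+1), ∑ j ∈ Finset.range (n+1+1-i),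
          Dop (f j) (Phiop (g i) (f (n+1-i-j))) x1 x2 x3 x4 x5
          = Dop bracket (Omega2 f g n) x1 x2 x3 x4 x5 := by
        rw [regroup_swap (n+1) (fun i j => Dop (f j) (Phiop (g i) (f (n+1-i-j))) x1 x2 x3 x4 x5)]
        rw [Finset.sum_range_succ']
        have hz4 : ∀ j ∈ Finset.range (n+1), (∑ i ∈ Finset.range (n+1+1-(j+1)),
            Dop (f (j+1)) (Phiop (g i) (f (n+1-i-(j+1)))) x1 x2 x3 x4 x5) = 0 := by
          intro j hj
          have hj' : j < n+1 := Finset.mem_range.mp hj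
          have hN : n+1+1-(j+1) = (n-j)+1 := by omega
          have hN2 : ∀ i : ℕ, n+1-i-(j+1) = (n-j)-i := fun i => by omega
          rw [hN]; simp only [hN2]
          rw [Dop_sum_right (htri (j+1))]
          exact Dop_zero_right (htri (j+1))
            (fun x y z => hDer (n-j) (by omega) x y z) x1 x2 x3 x4 x5
        rw [Finset.sum_eq_zero hz4, zero_add]
        simp only [Nat.sub_zero]
        rw [hf0, Dop_sum_right hb3, hOm2fun]
      calc ∑ i ∈ Finset.Ioo 0 (n+1), Phi2op θ (Dop (f i) (f (n+1-i))) x1 x2 x3 x4 x5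
          = ∑ i ∈ Finset.range (n+1+1),
              Phi2op θ (Dop (f i) (f (n+1-i))) x1 x2 x3 x4 x5 := hLP
        _ = ∑ i ∈ Finset.range (n+1+1), ∑ j ∈ Finset.range (n+1+1-i),
              Phi2op (g i) (Dop (f j) (f (n+1-i-j))) x1 x2 x3 x4 x5 := hV.symm
        _ = ∑ i ∈ Finset.range (n+1+1), ∑ j ∈ Finset.range (n+1+1-i),
              (Dop (Phiop (g i) (f j)) (f (n+1-i-j)) x1 x2 x3 x4 x5
                + Dop (f j) (Phiop (g i) (f (n+1-i-j))) x1 x2 x3 x4 x5) := hG2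
        _ = (∑ i ∈ Finset.range (n+1+1), ∑ j ∈ Finset.range (n+1+1-i),
              Dop (Phiop (g i) (f j)) (f (n+1-i-j)) x1 x2 x3 x4 x5)
            + ∑ i ∈ Finset.range (n+1+1), ∑ j ∈ Finset.range (n+1+1-i),
              Dop (f j) (Phiop (g i) (f (n+1-i-j))) x1 x2 x3 x4 x5 := by
            simp only [Finset.sum_add_distrib]
        _ = Dop (Omega2 f g n) bracket x1 x2 x3 x4 x5
            + Dop bracket (Omega2 f g n) x1 x2 x3 x4 x5 := by rw [hX, hY]
        _ = ∑ i ∈ Finset.Ioo 0 (n+1),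
              (Dop (Phiop (g i) (f (n+1-i))) bracket x1 x2 x3 x4 x5
                + Dop bracket (Phiop (g i) (f (n+1-i))) x1 x2 x3 x4 x5) := by
            rw [Finset.sum_add_distrib, Dop_sum_left, Dop_sum_right hb3]
            rfl
    rw [hkey]
    abel
end

section
/- Let (f_t,g_t) be a deformation of order n of a 3-LieDer pair (L,θ_L). Then (f_t,g_t) is extensible to a deformation of order n+1 if and only if the cohomology class [(Ω³_{n+1}, Ω²_{n+1})] of the obstruction cochain in H³_{3-LieDer}(L;L) is trivial. -/
open Function Finset

section AuxLemmas
variable {L : Type*} [AddCommGroup L]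

private lemma sum_split' (n : ℕ) {M : Type*} [AddCommGroup M] (h : ℕ → M) :
    ∑ i ∈ Finset.range (n + 1 + 1), h i
      = h 0 + h (n + 1) + ∑ i ∈ Finset.Ioo 0 (n + 1), h i := by
  have hs : Finset.range (n + 1 + 1) = insert 0 (insert (n + 1) (Finset.Ioo 0 (n + 1))) := by
    ext i
    simp only [Finset.mem_range, Finset.mem_insert, Finset.mem_Ioo]
    omega
  rw [hs, Finset.sum_insert (by simp only [Finset.mem_insert, Finset.mem_Ioo]; omega),
    Finset.sum_insert (by simp only [Finset.mem_Ioo]; omega)]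
  abel

private lemma key3 (br ψ : L → L → L → L) (hbskew : SkewTri br) (x1 x2 x3 x4 x5 : L) :
    br (ψ x1 x2 x3) x4 x5 + br x3 (ψ x1 x2 x4) x5 + br x3 x4 (ψ x1 x2 x5)
        - br x1 x2 (ψ x3 x4 x5)
      + (ψ (br x1 x2 x3) x4 x5 + ψ x3 (br x1 x2 x4) x5 + ψ x3 x4 (br x1 x2 x5)
        - ψ x1 x2 (br x3 x4 x5))
    = - d2c br br ψ x1 x2 x3 x4 x5 := by
  have e1 : br (ψ x1 x2 x3) x4 x5 = br x4 x5 (ψ x1 x2 x3) := by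
    rw [hbskew.1 (ψ x1 x2 x3) x4 x5, hbskew.2 x4 (ψ x1 x2 x3) x5, neg_neg]
  have e2 : br x3 (ψ x1 x2 x4) x5 = - br x3 x5 (ψ x1 x2 x4) := hbskew.2 _ _ _
  simp only [d2c]
  rw [e1, e2]
  abel

private lemma key2 (br : L → L → L → L) (gn1 : L → L) (hbskew : SkewTri br) (x y z : L) :
    gn1 (br x y z) - br (gn1 x) y z - br x (gn1 y) z - br x y (gn1 z)
    = - d1c br br gn1 x y z := by
  have e1 : br (gn1 x) y z = br y z (gn1 x) := by
    rw [hbskew.1 (gn1 x) y z, hbskew.2 y (gn1 x) z, neg_neg]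
  have e2 : br x (gn1 y) z = - br x z (gn1 y) := hbskew.2 _ _ _
  simp only [d1c]
  rw [e1, e2]
  abel

private lemma sum3_eq (n : ℕ) (f : ℕ → L → L → L → L) (χ2 br : L → L → L → L)
    (hf0 : f 0 = br) (hbskew : SkewTri br) (x1 x2 x3 x4 x5 : L) :
    ∑ i ∈ Finset.range (n + 1 + 1),
        (Function.update f (n + 1) χ2 i
            (Function.update f (n + 1) χ2 (n + 1 - i) x1 x2 x3) x4 x5
          + Function.update f (n + 1) χ2 i x3
            (Function.update f (n + 1) χ2 (n + 1 - i) x1 x2 x4) x5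
          + Function.update f (n + 1) χ2 i x3 x4
            (Function.update f (n + 1) χ2 (n + 1 - i) x1 x2 x5)
          - Function.update f (n + 1) χ2 i x1 x2
            (Function.update f (n + 1) χ2 (n + 1 - i) x3 x4 x5))
    = Omega3 f n x1 x2 x3 x4 x5 - d2c br br χ2 x1 x2 x3 x4 x5 := by
  set F := Function.update f (n + 1) χ2 with hF
  rw [sum_split']
  have hmid : ∑ i ∈ Finset.Ioo 0 (n + 1),
      (F i (F (n + 1 - i) x1 x2 x3) x4 x5 + F i x3 (F (n + 1 - i) x1 x2 x4) x5
        + F i x3 x4 (F (n + 1 - i) x1 x2 x5) - F i x1 x2 (F (n + 1 - i) x3 x4 x5))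
      = Omega3 f n x1 x2 x3 x4 x5 := by
    simp only [Omega3]
    refine Finset.sum_congr rfl fun i hi => ?_
    simp only [Finset.mem_Ioo] at hi
    rw [hF, Function.update_of_ne (by omega : i ≠ n + 1),
      Function.update_of_ne (by omega : n + 1 - i ≠ n + 1)]
  rw [hmid]
  have h0 : F 0 = br := by rw [hF, Function.update_of_ne (by omega : 0 ≠ n + 1), hf0]
  have h1 : F (n + 1) = χ2 := by rw [hF, Function.update_self]
  simp only [Nat.sub_zero, Nat.sub_self, h0, h1]
  rw [key3 br χ2 hbskew]
  abel

private lemma sum2_eq (n : ℕ) (f : ℕ → L → L → L → L) (g : ℕ → L → L)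
    (χ2 : L → L → L → L) (χ1 : L → L) (br : L → L → L → L) (θ : L → L)
    (hf0 : f 0 = br) (hg0 : g 0 = θ) (hbskew : SkewTri br) (x1 x2 x3 : L) :
    ∑ i ∈ Finset.range (n + 1 + 1),
        (Function.update g (n + 1) χ1 i
            (Function.update f (n + 1) χ2 (n + 1 - i) x1 x2 x3)
          - Function.update f (n + 1) χ2 (n + 1 - i)
            (Function.update g (n + 1) χ1 i x1) x2 x3
          - Function.update f (n + 1) χ2 (n + 1 - i) x1
            (Function.update g (n + 1) χ1 i x2) x3
          - Function.update f (n + 1) χ2 (n + 1 - i) x1 x2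
            (Function.update g (n + 1) χ1 i x3))
    = Omega2 f g n x1 x2 x3 - d1c br br χ1 x1 x2 x3 - delta2c θ θ χ2 x1 x2 x3 := by
  set F := Function.update f (n + 1) χ2 with hF
  set G := Function.update g (n + 1) χ1 with hG
  rw [sum_split']
  have hmid : ∑ i ∈ Finset.Ioo 0 (n + 1),
      (G i (F (n + 1 - i) x1 x2 x3) - F (n + 1 - i) (G i x1) x2 x3
        - F (n + 1 - i) x1 (G i x2) x3 - F (n + 1 - i) x1 x2 (G i x3))
      = Omega2 f g n x1 x2 x3 := by
    simp only [Omega2]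
    refine Finset.sum_congr rfl fun i hi => ?_
    simp only [Finset.mem_Ioo] at hi
    rw [hF, hG, Function.update_of_ne (by omega : i ≠ n + 1),
      Function.update_of_ne (by omega : n + 1 - i ≠ n + 1)]
  rw [hmid]
  have hF0 : F 0 = br := by rw [hF, Function.update_of_ne (by omega : 0 ≠ n + 1), hf0]
  have hF1 : F (n + 1) = χ2 := by rw [hF, Function.update_self]
  have hG0 : G 0 = θ := by rw [hG, Function.update_of_ne (by omega : 0 ≠ n + 1), hg0]
  have hG1 : G (n + 1) = χ1 := by rw [hG, Function.update_self]
  simp only [Nat.sub_zero, Nat.sub_self, hF0, hF1, hG0, hG1]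
  rw [key2 br χ1 hbskew]
  simp only [delta2c]
  abel

end AuxLemmas

/-- Let `(f_t, g_t)` be a deformation of order `n` of the 3-LieDer
pair `(L, bracket, θ)`.  Then `(f_t, g_t)` is extensible to a deformation of order
`n+1` (by adjoining a 2-cochain `(f_{n+1}, g_{n+1})`) if and only if the cohomology
class of the obstruction cochain `(Ω³_{n+1}, Ω²_{n+1})` in `H³_{3-LieDer}(L;L)` is
trivial: `(Ω³_{n+1}, Ω²_{n+1}) = ∂(χ₂, χ₁) = (dχ₂, dχ₁ + δχ₂)` for some 2-cochain
`(χ₂, χ₁)`. -/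
theorem statement14 {F L : Type*} [Field F] [CharZero F]
    [AddCommGroup L] [Module F L] [FiniteDimensional F L]
    (bracket : L → L → L → L) (hb3 : IsTrilin F bracket) (hbskew : SkewTri bracket)
    (hbFI : FundId bracket)
    (θ : L → L) (hθlin : IsLinearMap F θ) (hθ : IsDeriv3 bracket θ)
    (n : ℕ) (f : ℕ → L → L → L → L) (g : ℕ → L → L)
    (hdef : IsOrderNDeformation F bracket θ n f g) :
    (∃ (fn1 : L → L → L → L) (gn1 : L → L),
        IsTrilin F fn1 ∧ SkewTri fn1 ∧ IsLinearMap F gn1 ∧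
        IsOrderNDeformation F bracket θ (n + 1)
          (Function.update f (n + 1) fn1) (Function.update g (n + 1) gn1))
    ↔ (∃ (χ2 : L → L → L → L) (χ1 : L → L),
        IsTrilin F χ2 ∧ SkewTri χ2 ∧ IsLinearMap F χ1 ∧
        Omega3 f n = d2c bracket bracket χ2 ∧
        Omega2 f g n = d1c bracket bracket χ1 + delta2c θ θ χ2) := by
  obtain ⟨hf0, hg0, htri, hskew, hglin, hfz, hgz, hFI, hDer⟩ := hdef
  constructor
  · rintro ⟨fn1, gn1, ht1, hs1, hl1, hext⟩
    obtain ⟨-, -, -, -, -, -, -, hFI', hDer'⟩ := hext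
    refine ⟨fn1, gn1, ht1, hs1, hl1, ?_, ?_⟩
    · funext x1 x2 x3 x4 x5
      have H := hFI' (n + 1) le_rfl x1 x2 x3 x4 x5
      rw [sum3_eq n f fn1 bracket hf0 hbskew] at H
      exact sub_eq_zero.mp H
    · funext x1 x2 x3
      have H := hDer' (n + 1) le_rfl x1 x2 x3
      rw [sum2_eq n f g fn1 gn1 bracket θ hf0 hg0 hbskew, sub_sub] at H
      simpa using sub_eq_zero.mp H
  · rintro ⟨χ2, χ1, ht1, hs1, hl1, h3eq, h2eq⟩
    refine ⟨χ2, χ1, ht1, hs1, hl1, ?_, ?_, ?_, ?_, ?_, ?_, ?_, ?_, ?_⟩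
    · rw [Function.update_of_ne (by omega : 0 ≠ n + 1), hf0]
    · rw [Function.update_of_ne (by omega : 0 ≠ n + 1), hg0]
    · intro i
      by_cases hi : i = n + 1
      · subst hi; rw [Function.update_self]; exact ht1
      · rw [Function.update_of_ne hi]; exact htri i
    · intro i
      by_cases hi : i = n + 1
      · subst hi; rw [Function.update_self]; exact hs1
      · rw [Function.update_of_ne hi]; exact hskew i
    · intro i
      by_cases hi : i = n + 1
      · subst hi; rw [Function.update_self]; exact hl1
      · rw [Function.update_of_ne hi]; exact hglin i
    · intro i hi
      rw [Function.update_of_ne (by omega : i ≠ n + 1)]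
      exact hfz i (by omega)
    · intro i hi
      rw [Function.update_of_ne (by omega : i ≠ n + 1)]
      exact hgz i (by omega)
    · intro N hN x1 x2 x3 x4 x5
      by_cases hNn : N ≤ n
      · refine Eq.trans (Finset.sum_congr rfl fun i hi => ?_) (hFI N hNn x1 x2 x3 x4 x5)
        simp only [Finset.mem_range] at hi
        rw [Function.update_of_ne (by omega : i ≠ n + 1),
          Function.update_of_ne (by omega : N - i ≠ n + 1)]
      · have hN1 : N = n + 1 := by omega
        subst hN1
        rw [sum3_eq n f χ2 bracket hf0 hbskew, h3eq, sub_self]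
    · intro N hN x1 x2 x3
      by_cases hNn : N ≤ n
      · refine Eq.trans (Finset.sum_congr rfl fun i hi => ?_) (hDer N hNn x1 x2 x3)
        simp only [Finset.mem_range] at hi
        rw [Function.update_of_ne (by omega : i ≠ n + 1),
          Function.update_of_ne (by omega : N - i ≠ n + 1)]
      · have hN1 : N = n + 1 := by omega
        subst hN1
        rw [sum2_eq n f g χ2 χ1 bracket θ hf0 hg0 hbskew, h2eq]
        simp only [Pi.add_apply]
        abel
end

section
/- Let (B,θ_B) be a 3-LieDer pair and (A;ρ,θ_A) a representation of (B,θ_B). Let ψ ∈ C²(B;A) (a trilinear skew-symmetric map ∧³B → A) and λ ∈ Hom(B,A). Define on B ⊕ A the bracket [x1+a1, x2+a2, x3+a3]_{(ρ,ψ)} = [x1,x2,x3]_B + ψ(x1,x2,x3) + ρ(x1,x2)(a3) + ρ(x2,x3)(a1) + ρ(x3,x1)(a2) and the map θ_λ(x+a) = θ_B(x) + λ(x) + θ_A(a). Then (B ⊕ A, [·,·,·]_{(ρ,ψ)}, θ_λ) is a 3-LieDer pair if and only if (ψ,λ) ∈ Z²_{3-LieDer}(B;A). -/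
open Function Finset

/-- The bracket `[·,·,·]_{(ρ,ψ)}` on `B ⊕ A` twisted by the 2-cochain `ψ`. -/
def extBracket {B A : Type*} [AddCommGroup B] [AddCommGroup A]
    (brB : B → B → B → B) (ρ : B → B → A → A) (ψ : B → B → B → A) :
    B × A → B × A → B × A → B × A :=
  fun p q r =>
    (brB p.1 q.1 r.1,
      ψ p.1 q.1 r.1 + ρ p.1 q.1 r.2 + ρ q.1 r.1 p.2 + ρ r.1 p.1 q.2)

/-- The map `θ_λ(x + a) = θ_B(x) + λ(x) + θ_A(a)` on `B ⊕ A`. -/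
def extDer {B A : Type*} [AddCommGroup B] [AddCommGroup A]
    (θB : B → B) (θA : A → A) (lam : B → A) : B × A → B × A :=
  fun p => (θB p.1, lam p.1 + θA p.2)

/-- Let `(B, θB)` be a 3-LieDer pair and `(A; ρ, θA)` a
representation of `(B, θB)`.  For a 2-cochain `(ψ, λ)`, the data
`(B ⊕ A, [·,·,·]_{(ρ,ψ)}, θ_λ)` is a 3-LieDer pair if and only if
`(ψ, λ) ∈ Z²_{3-LieDer}(B;A)`, i.e. `dψ = 0` and `dλ + δψ = 0`. -/
theorem statement15 {F B A : Type*} [Field F] [CharZero F]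
    [AddCommGroup B] [Module F B] [FiniteDimensional F B]
    [AddCommGroup A] [Module F A] [FiniteDimensional F A]
    (brB : B → B → B → B) (hb3 : IsTrilin F brB) (hbskew : SkewTri brB)
    (hbFI : FundId brB)
    (θB : B → B) (hθBlin : IsLinearMap F θB) (hθB : IsDeriv3 brB θB)
    (ρ : B → B → A → A) (θA : A → A) (hθAlin : IsLinearMap F θA)
    (hrep : IsRepPair F brB θB ρ θA)
    (ψ : B → B → B → A) (hψ3 : IsTrilin F ψ) (hψskew : SkewTri ψ)
    (lam : B → A) (hlam : IsLinearMap F lam) :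
    (SkewTri (extBracket brB ρ ψ) ∧ FundId (extBracket brB ρ ψ) ∧
      IsDeriv3 (extBracket brB ρ ψ) (extDer θB θA lam))
    ↔ (d2c brB ρ ψ = 0 ∧ d1c brB ρ lam + delta2c θB θA ψ = 0) := by
  obtain ⟨⟨hρ1, hρ2, hρ3, hρ4, hρ5, hρ6⟩, hcomp⟩ := hrep
  have hadd : ∀ x y (u v : A), ρ x y (u + v) = ρ x y u + ρ x y v :=
    fun x y u v => (hρ3 x y).map_add u v
  have hneg : ∀ x y (v : A), ρ x y (-v) = - ρ x y v :=
    fun x y v => (hρ3 x y).map_neg v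
  have hzero : ∀ x y, ρ x y (0 : A) = 0 := fun x y => (hρ3 x y).map_zero
  have hθAadd : ∀ u v : A, θA (u + v) = θA u + θA v := hθAlin.map_add
  have hθAzero : θA (0 : A) = 0 := hθAlin.map_zero
  have hc : ∀ x y v, θA (ρ x y v)
      = ρ (θB x) y v + ρ x (θB y) v + ρ x y (θA v) :=
    fun x y v => eq_add_of_sub_eq (hcomp x y v)
  constructor
  · rintro ⟨-, hFI, hDer⟩
    constructor
    · funext x1 x2 x3 x4 z
      have h := congrArg Prod.snd (hFI (x1, (0:A)) (x2, 0) (x3, 0) (x4, 0) (z, 0))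
      simp only [extBracket, Prod.mk_add_mk, hzero, add_zero, zero_add] at h
      show d2c brB ρ ψ x1 x2 x3 x4 z = (0 : B → B → B → B → B → A) x1 x2 x3 x4 z
      simp only [Pi.zero_apply, d2c]
      rw [← sub_eq_zero.mpr h, hρ4 z x3 (ψ x1 x2 x4)]
      abel
    · funext x y z
      have h := congrArg Prod.snd (hDer (x, (0:A)) (y, 0) (z, 0))
      simp only [extBracket, extDer, Prod.mk_add_mk, hzero, hθAzero, add_zero,
        zero_add] at h
      show d1c brB ρ lam x y z + delta2c θB θA ψ x y z
          = (0 : B → B → B → A) x y z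
      simp only [Pi.zero_apply, d1c, delta2c]
      rw [← sub_eq_zero.mpr h.symm, hρ4 z x (lam y)]
      abel
  · rintro ⟨hd2, hz⟩
    have hd2' : ∀ a b c d e, d2c brB ρ ψ a b c d e = 0 := by
      intro a b c d e; rw [hd2]; rfl
    have hz' : ∀ x y z, d1c brB ρ lam x y z + delta2c θB θA ψ x y z = 0 := by
      intro x y z
      have := congrFun (congrFun (congrFun hz x) y) z
      simpa using this
    have hψeq : ∀ x1 x2 x3 x4 x5, ψ x1 x2 (brB x3 x4 x5)
        = ψ (brB x1 x2 x3) x4 x5 + ψ x3 (brB x1 x2 x4) x5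
          + ψ x3 x4 (brB x1 x2 x5) - ρ x1 x2 (ψ x3 x4 x5)
          + ρ x3 x4 (ψ x1 x2 x5) + ρ x4 x5 (ψ x1 x2 x3)
          - ρ x3 x5 (ψ x1 x2 x4) := by
      intro x1 x2 x3 x4 x5
      have h := hd2' x1 x2 x3 x4 x5
      rw [← sub_eq_zero, ← h]
      simp only [d2c]
      abel
    have hlameq : ∀ x y z, lam (brB x y z)
        = ψ (θB x) y z + ψ x (θB y) z + ψ x y (θB z) - θA (ψ x y z)
          + ρ x y (lam z) + ρ y z (lam x) - ρ x z (lam y) := by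
      intro x y z
      have h := hz' x y z
      rw [← sub_eq_zero, ← neg_eq_zero, ← h]
      simp only [d1c, delta2c]
      abel
    refine ⟨⟨?_, ?_⟩, ?_, ?_⟩
    · rintro ⟨x, a⟩ ⟨y, b⟩ ⟨z, c⟩
      simp only [extBracket, Prod.neg_mk, Prod.mk.injEq]
      refine ⟨hbskew.1 x y z, ?_⟩
      rw [hψskew.1 x y z, hρ4 x y c, hρ4 y z a, hρ4 z x b]
      abel
    · rintro ⟨x, a⟩ ⟨y, b⟩ ⟨z, c⟩
      simp only [extBracket, Prod.neg_mk, Prod.mk.injEq]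
      refine ⟨hbskew.2 x y z, ?_⟩
      rw [hψskew.2 x y z, hρ4 x y c, hρ4 y z a, hρ4 z x b]
      abel
    · rintro ⟨x1, a1⟩ ⟨x2, a2⟩ ⟨x3, a3⟩ ⟨x4, a4⟩ ⟨x5, a5⟩
      simp only [extBracket, Prod.mk_add_mk, Prod.mk.injEq]
      refine ⟨hbFI x1 x2 x3 x4 x5, ?_⟩
      rw [hψeq x1 x2 x3 x4 x5]
      simp only [hadd]
      rw [hρ5 x1 x2 x3 x4 a5, hρ5 x1 x2 x4 x5 a3, hρ5 x1 x2 x5 x3 a4,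
        hρ6 x2 x3 x4 x5 a1, hρ4 (brB x3 x4 x5) x1 a2, hρ6 x1 x3 x4 x5 a2,
        hρ4 x5 x3 (ψ x1 x2 x4), hρ4 x3 x1 a2, hρ4 x5 x3 (ρ x2 x4 a1),
        hρ4 x4 x1 a2, hρ4 x5 x1 a2]
      simp only [hneg]
      rw [hρ4 x5 x3 (ρ x1 x4 a2)]
      abel
    · rintro ⟨x, a1⟩ ⟨y, a2⟩ ⟨z, a3⟩
      simp only [extBracket, extDer, Prod.mk_add_mk, Prod.mk.injEq]
      refine ⟨hθB x y z, ?_⟩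
      simp only [hθAadd, hadd]
      rw [hlameq x y z, hc x y a3, hc y z a1, hc z x a2, hρ4 z x (lam y)]
      abel
end

section
/- Let 0 → (A,θ_A) →i (L,θ_L) →π (B,θ_B) → 0 be an abelian extension of 3-LieDer pairs and s : B → L a section of π. Define ρ(x,y)(a) = [s(x),s(y),a]_L, ω(x,y,z) = [s(x),s(y),s(z)]_L − s([x,y,z]_B), and μ(x) = θ_L(s(x)) − s(θ_B(x)) for x,y,z ∈ B, a ∈ A. Then: (1) (A;ρ,θ_A) is a representation of the 3-LieDer pair (B,θ_B) (and ρ does not depend on the choice of section); (2) (ω,μ) ∈ Z²_{3-LieDer}(B;A); (3) the cohomology class [(ω,μ)] ∈ H²_{3-LieDer}(B;A) does not depend on the choice of the section s. -/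
open Function Finset

/-- `0 → (A,θA) → (Lt,θL) → (B,θB) → 0` is an abelian extension of 3-LieDer pairs:
a short exact sequence of 3-LieDer pair morphisms in which (the image of) `A` is an
abelian ideal of `Lt`. -/
def IsAbelianExtension (F : Type*) {A Lt B : Type*} [Field F]
    [AddCommGroup A] [Module F A] [AddCommGroup Lt] [Module F Lt]
    [AddCommGroup B] [Module F B]
    (brA : A → A → A → A) (θA : A → A)
    (brL : Lt → Lt → Lt → Lt) (θL : Lt → Lt)
    (brB : B → B → B → B) (θB : B → B)
    (i : A → Lt) (π : Lt → B) : Prop :=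
  -- the three 3-LieDer pairs
  (IsTrilin F brA ∧ SkewTri brA ∧ FundId brA ∧ IsLinearMap F θA ∧ IsDeriv3 brA θA) ∧
  (IsTrilin F brL ∧ SkewTri brL ∧ FundId brL ∧ IsLinearMap F θL ∧ IsDeriv3 brL θL) ∧
  (IsTrilin F brB ∧ SkewTri brB ∧ FundId brB ∧ IsLinearMap F θB ∧ IsDeriv3 brB θB) ∧
  -- `i` and `π` are morphisms of 3-LieDer pairs
  (IsLinearMap F i ∧ (∀ a b c, i (brA a b c) = brL (i a) (i b) (i c)) ∧
    (∀ a, i (θA a) = θL (i a))) ∧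
  (IsLinearMap F π ∧ (∀ p q r, π (brL p q r) = brB (π p) (π q) (π r)) ∧
    (∀ p, π (θL p) = θB (π p))) ∧
  -- exactness
  Function.Injective i ∧ Function.Surjective π ∧ (∀ p, π p = 0 ↔ ∃ a, i a = p) ∧
  -- `A` is an abelian ideal
  (∀ a b p, brL (i a) (i b) p = 0)

/-- Let `0 → (A,θA) → (L,θL) → (B,θB) → 0` be an abelian extension
of 3-LieDer pairs and `s : B → L` a section of `π`.  With
`ρ(x,y)a = [s(x),s(y),a]_L`, `ω(x,y,z) = [s(x),s(y),s(z)]_L - s([x,y,z]_B)` and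
`μ(x) = θL(s(x)) - s(θB(x))`:
(1) `(A; ρ, θA)` is a representation of the 3-LieDer pair `(B,θB)` and `ρ` does not
depend on the choice of section;
(2) `(ω, μ) ∈ Z²_{3-LieDer}(B;A)`;
(3) the cohomology class `[(ω,μ)] ∈ H²_{3-LieDer}(B;A)` does not depend on the choice
of the section. -/
theorem statement16 {F A Lt B : Type*} [Field F] [CharZero F]
    [AddCommGroup A] [Module F A] [FiniteDimensional F A]
    [AddCommGroup Lt] [Module F Lt] [FiniteDimensional F Lt]
    [AddCommGroup B] [Module F B] [FiniteDimensional F B]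
    (brA : A → A → A → A) (θA : A → A)
    (brL : Lt → Lt → Lt → Lt) (θL : Lt → Lt)
    (brB : B → B → B → B) (θB : B → B)
    (i : A → Lt) (π : Lt → B)
    (hext : IsAbelianExtension F brA θA brL θL brB θB i π)
    (s : B → Lt) (hslin : IsLinearMap F s) (hsec : ∀ b, π (s b) = b) :
    ∃ ρ : B → B → A → A,
      -- ρ is characterized by `i (ρ x y a) = [s x, s y, i a]_L`
      (∀ x y a, i (ρ x y a) = brL (s x) (s y) (i a)) ∧
      -- (1) it is a representation of the 3-LieDer pair `(B,θB)` on `A` …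
      IsRepPair F brB θB ρ θA ∧
      -- … and does not depend on the choice of the section
      (∀ s' : B → Lt, IsLinearMap F s' → (∀ b, π (s' b) = b) →
        ∀ x y a, brL (s' x) (s' y) (i a) = brL (s x) (s y) (i a)) ∧
      ∃ (ω : B → B → B → A) (μ : B → A),
        (∀ x y z, i (ω x y z) = brL (s x) (s y) (s z) - s (brB x y z)) ∧
        (∀ x, i (μ x) = θL (s x) - s (θB x)) ∧
        IsTrilin F ω ∧ SkewTri ω ∧ IsLinearMap F μ ∧
        -- (2) `(ω, μ)` is a 2-cocycle
        d2c brB ρ ω = 0 ∧ d1c brB ρ μ + delta2c θB θA ω = 0 ∧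
        -- (3) the class of `(ω, μ)` does not depend on the section
        (∀ (s' : B → Lt) (ω' : B → B → B → A) (μ' : B → A),
          IsLinearMap F s' → (∀ b, π (s' b) = b) →
          (∀ x y z, i (ω' x y z) = brL (s' x) (s' y) (s' z) - s' (brB x y z)) →
          (∀ x, i (μ' x) = θL (s' x) - s' (θB x)) →
          ∃ lam : B → A, IsLinearMap F lam ∧
            (∀ x y z, ω x y z - ω' x y z = d1c brB ρ lam x y z) ∧
            (∀ x, μ x - μ' x = - delta1c θB θA lam x)) := by
    classical
  obtain ⟨⟨hAtri, hAskew, hAfund, hAθ, hAder⟩,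
    ⟨hLtri, hLskew, hLfund, hLθ, hLder⟩,
    ⟨hBtri, hBskew, hBfund, hBθlin, hBder⟩,
    ⟨hilin, hibr, hiθ⟩, ⟨hπlin, hπbr, hπθ⟩,
    hinj, hsurj, hker, hab⟩ := hext
  have hinj' : ∀ {a b : A}, i a = i b → a = b := fun h => hinj h
  have hmk : ∀ p : Lt, π p = 0 → ∃ a : A, i a = p := fun p hp => (hker p).mp hp
  have hπi : ∀ a : A, π (i a) = 0 := fun a => (hker (i a)).mpr ⟨a, rfl⟩
  obtain ⟨hsw12, hsw23⟩ := hLskew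
  have hcyc : ∀ p q r, brL p q r = brL q r p := fun p q r => by
    rw [hsw12 p q r, hsw23 q p r, neg_neg]
  have hab13 : ∀ (a : A) p (b : A), brL (i a) p (i b) = 0 := fun a p b => by
    rw [hsw23, hab, neg_zero]
  have hab23 : ∀ p (a b : A), brL p (i a) (i b) = 0 := fun p a b => by
    rw [hcyc, hab]
  -- trilinearity helpers for brL
  have h1add : ∀ p p' q r, brL (p + p') q r = brL p q r + brL p' q r :=
    fun p p' q r => (hLtri.1 q r).map_add p p'
  have h2add : ∀ p q q' r, brL p (q + q') r = brL p q r + brL p q' r :=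
    fun p q q' r => (hLtri.2.1 p r).map_add q q'
  have h3add : ∀ p q r r', brL p q (r + r') = brL p q r + brL p q r' :=
    fun p q r r' => (hLtri.2.2 p q).map_add r r'
  have h1sub : ∀ p p' q r, brL (p - p') q r = brL p q r - brL p' q r :=
    fun p p' q r => (hLtri.1 q r).map_sub p p'
  have h2sub : ∀ p q q' r, brL p (q - q') r = brL p q r - brL p q' r :=
    fun p q q' r => (hLtri.2.1 p r).map_sub q q'
  have h3sub : ∀ p q r r', brL p q (r - r') = brL p q r - brL p q r' :=
    fun p q r r' => (hLtri.2.2 p q).map_sub r r'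
  have h1smul : ∀ (c : F) p q r, brL (c • p) q r = c • brL p q r :=
    fun c p q r => (hLtri.1 q r).map_smul c p
  have h2smul : ∀ (c : F) p q r, brL p (c • q) r = c • brL p q r :=
    fun c p q r => (hLtri.2.1 p r).map_smul c q
  have h3smul : ∀ (c : F) p q r, brL p q (c • r) = c • brL p q r :=
    fun c p q r => (hLtri.2.2 p q).map_smul c r
  have h1neg : ∀ p q r, brL (-p) q r = - brL p q r :=
    fun p q r => (hLtri.1 q r).map_neg p
  have h2neg : ∀ p q r, brL p (-q) r = - brL p q r :=
    fun p q r => (hLtri.2.1 p r).map_neg q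
  have h3neg : ∀ p q r, brL p q (-r) = - brL p q r :=
    fun p q r => (hLtri.2.2 p q).map_neg r
  -- trilinearity helpers for brB
  have hb1add : ∀ x x' y z, brB (x + x') y z = brB x y z + brB x' y z :=
    fun x x' y z => (hBtri.1 y z).map_add x x'
  have hb2add : ∀ x y y' z, brB x (y + y') z = brB x y z + brB x y' z :=
    fun x y y' z => (hBtri.2.1 x z).map_add y y'
  have hb3add : ∀ x y z z', brB x y (z + z') = brB x y z + brB x y z' :=
    fun x y z z' => (hBtri.2.2 x y).map_add z z'
  have hb1smul : ∀ (c : F) x y z, brB (c • x) y z = c • brB x y z :=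
    fun c x y z => (hBtri.1 y z).map_smul c x
  have hb2smul : ∀ (c : F) x y z, brB x (c • y) z = c • brB x y z :=
    fun c x y z => (hBtri.2.1 x z).map_smul c y
  have hb3smul : ∀ (c : F) x y z, brB x y (c • z) = c • brB x y z :=
    fun c x y z => (hBtri.2.2 x y).map_smul c z
  -- the maps ρ, ω, μ
  have hπρ : ∀ x y (a : A), π (brL (s x) (s y) (i a)) = 0 := by
    intro x y a
    rw [hπbr, hsec, hsec, hπi]
    exact (hBtri.2.2 x y).map_zero
  let ρ : B → B → A → A := fun x y a => (hmk _ (hπρ x y a)).choose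
  have hiρ : ∀ x y a, i (ρ x y a) = brL (s x) (s y) (i a) :=
    fun x y a => (hmk _ (hπρ x y a)).choose_spec
  have hπω : ∀ x y z, π (brL (s x) (s y) (s z) - s (brB x y z)) = 0 := by
    intro x y z
    rw [hπlin.map_sub, hπbr, hsec, hsec, hsec, hsec, sub_self]
  let ω : B → B → B → A := fun x y z => (hmk _ (hπω x y z)).choose
  have hiω : ∀ x y z, i (ω x y z) = brL (s x) (s y) (s z) - s (brB x y z) :=
    fun x y z => (hmk _ (hπω x y z)).choose_spec
  have hπμ : ∀ x, π (θL (s x) - s (θB x)) = 0 := by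
    intro x
    rw [hπlin.map_sub, hπθ, hsec, hsec, sub_self]
  let μ : B → A := fun x => (hmk _ (hπμ x)).choose
  have hiμ : ∀ x, i (μ x) = θL (s x) - s (θB x) :=
    fun x => (hmk _ (hπμ x)).choose_spec
  have hsb : ∀ x y z, s (brB x y z) = brL (s x) (s y) (s z) - i (ω x y z) :=
    fun x y z => by rw [hiω x y z]; abel
  have hθs : ∀ x, θL (s x) = s (θB x) + i (μ x) :=
    fun x => by rw [hiμ x]; abel
  have hT1 : ∀ u v w p q, brL (s (brB u v w)) p q
      = brL (brL (s u) (s v) (s w)) p q - brL (i (ω u v w)) p q := by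
    intro u v w p q; rw [hsb, h1sub]
  have hT2 : ∀ u v w p q, brL p (s (brB u v w)) q
      = brL p (brL (s u) (s v) (s w)) q - brL p (i (ω u v w)) q := by
    intro u v w p q; rw [hsb, h2sub]
  have hT3 : ∀ u v w p q, brL p q (s (brB u v w))
      = brL p q (brL (s u) (s v) (s w)) - brL p q (i (ω u v w)) := by
    intro u v w p q; rw [hsb, h3sub]
  refine ⟨ρ, hiρ, ⟨⟨?_, ?_, ?_, ?_, ?_, ?_⟩, ?_⟩, ?_, ω, μ, hiω, hiμ,
    ⟨?_, ?_, ?_⟩, ⟨?_, ?_⟩, ⟨?_, ?_⟩, ?_, ?_, ?_⟩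
  · -- ρ linear in first slot
    intro y v
    refine ⟨fun a b => hinj' ?_, fun c a => hinj' ?_⟩
    · simp only [hilin.map_add, hiρ, hslin.map_add, h1add]
    · simp only [hilin.map_smul, hiρ, hslin.map_smul, h1smul]
  · -- ρ linear in second slot
    intro x v
    refine ⟨fun a b => hinj' ?_, fun c a => hinj' ?_⟩
    · simp only [hilin.map_add, hiρ, hslin.map_add, h2add]
    · simp only [hilin.map_smul, hiρ, hslin.map_smul, h2smul]
  · -- ρ linear in third slot
    intro x y
    refine ⟨fun a b => hinj' ?_, fun c a => hinj' ?_⟩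
    · simp only [hilin.map_add, hiρ, h3add]
    · simp only [hilin.map_smul, hiρ, h3smul]
  · -- ρ skew
    intro x y v
    apply hinj'
    rw [hilin.map_neg, hiρ, hiρ, hsw12]
  · -- rep identity 1
    intro x1 x2 x3 x4 v
    apply hinj'
    simp only [hilin.map_add, hiρ, hsb, h1sub, h2sub, hab13, hab23, sub_zero]
    exact hLfund (s x1) (s x2) (s x3) (s x4) (i v)
  · -- rep identity 2
    intro x1 x2 x3 x4 v
    apply hinj'
    simp only [hilin.map_add, hilin.map_sub, hiρ, hsb, h2sub, hab23, sub_zero]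
    have key := hLfund (s x1) (i v) (s x2) (s x3) (s x4)
    rw [hsw23 (s x1) (i v) (brL (s x2) (s x3) (s x4)), hsw23 (s x1) (i v) (s x2),
      hsw23 (s x1) (i v) (s x3), hsw23 (s x1) (i v) (s x4), h1neg, h2neg, h3neg] at key
    have k2 := hcyc (brL (s x1) (s x2) (i v)) (s x3) (s x4)
    have k3 := hsw23 (s x2) (brL (s x1) (s x3) (i v)) (s x4)
    linear_combination (norm := module) -key + k2 + k3
  · -- derivation compatibility of ρ
    intro x y v
    apply hinj'
    simp only [hilin.map_sub, hilin.map_add, hiρ, hiθ]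
    have key := hLder (s x) (s y) (i v)
    rw [hθs x, hθs y, h1add, h2add] at key
    simp only [hab13, hab23, add_zero] at key
    linear_combination (norm := module) key
  · -- ρ independent of the section
    intro s' hs'lin hs'sec x y a
    have hπx : π (s' x - s x) = 0 := by rw [hπlin.map_sub, hs'sec, hsec, sub_self]
    have hπy : π (s' y - s y) = 0 := by rw [hπlin.map_sub, hs'sec, hsec, sub_self]
    obtain ⟨ax, hax⟩ := hmk _ hπx
    obtain ⟨ay, hay⟩ := hmk _ hπy
    have hx : s' x = s x + i ax := by rw [hax]; abel
    have hy : s' y = s y + i ay := by rw [hay]; abel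
    rw [hx, hy]
    simp only [h1add, h2add, hab, hab13, hab23, add_zero, zero_add]
  · -- ω linear in first slot
    intro y z
    refine ⟨fun a b => hinj' ?_, fun c a => hinj' ?_⟩
    · simp only [hilin.map_add, hiω, hslin.map_add, hb1add, h1add]
      abel
    · simp only [hilin.map_smul, hiω, hslin.map_smul, hb1smul, h1smul, smul_sub]
  · -- ω linear in second slot
    intro x z
    refine ⟨fun a b => hinj' ?_, fun c a => hinj' ?_⟩
    · simp only [hilin.map_add, hiω, hslin.map_add, hb2add, h2add]
      abel
    · simp only [hilin.map_smul, hiω, hslin.map_smul, hb2smul, h2smul, smul_sub]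
  · -- ω linear in third slot
    intro x y
    refine ⟨fun a b => hinj' ?_, fun c a => hinj' ?_⟩
    · simp only [hilin.map_add, hiω, hslin.map_add, hb3add, h3add]
      abel
    · simp only [hilin.map_smul, hiω, hslin.map_smul, hb3smul, h3smul, smul_sub]
  · -- ω skew 12
    intro x y z
    apply hinj'
    simp only [hilin.map_neg, hiω]
    rw [hsw12 (s x) (s y) (s z), hBskew.1 x y z, hslin.map_neg]
    abel
  · -- ω skew 23
    intro x y z
    apply hinj'
    simp only [hilin.map_neg, hiω]
    rw [hsw23 (s x) (s y) (s z), hBskew.2 x y z, hslin.map_neg]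
    abel
  · -- μ additive
    intro a b
    apply hinj'
    simp only [hilin.map_add, hiμ, hslin.map_add, hBθlin.map_add, hLθ.map_add]
    abel
  · -- μ smul
    intro c a
    apply hinj'
    simp only [hilin.map_smul, hiμ, hslin.map_smul, hBθlin.map_smul, hLθ.map_smul, smul_sub]
  · -- (ω) is a 2-cocycle : d2c = 0
    funext x1 x2 x3 x4 z
    simp only [d2c, Pi.zero_apply]
    apply hinj'
    simp only [hilin.map_zero, hilin.map_add, hilin.map_sub, hilin.map_neg, hiρ, hiω]
    simp only [h3sub]
    simp only [hT1, hT2, hT3]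
    have kL := hLfund (s x1) (s x2) (s x3) (s x4) (s z)
    have kS : s (brB x1 x2 (brB x3 x4 z))
        = s (brB (brB x1 x2 x3) x4 z) + s (brB x3 (brB x1 x2 x4) z)
          + s (brB x3 x4 (brB x1 x2 z)) := by
      rw [hBfund x1 x2 x3 x4 z, hslin.map_add, hslin.map_add]
    have kc1 := hcyc (i (ω x1 x2 x3)) (s x4) (s z)
    have kc2 := hsw23 (s x3) (i (ω x1 x2 x4)) (s z)
    linear_combination (norm := module) kL + kc1 + kc2 - kS
  · -- cocycle condition involving μ
    funext x y z
    simp only [Pi.add_apply, Pi.zero_apply, d1c, delta2c]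
    apply hinj'
    simp only [hilin.map_zero, hilin.map_add, hilin.map_sub, hilin.map_neg,
      hiρ, hiμ, hiθ, hiω]
    simp only [h3sub, hLθ.map_sub]
    have kder := hLder (s x) (s y) (s z)
    have kBder : s (θB (brB x y z))
        = s (brB (θB x) y z) + s (brB x (θB y) z) + s (brB x y (θB z)) := by
      rw [hBder x y z, hslin.map_add, hslin.map_add]
    have kc3 := hcyc (θL (s x)) (s y) (s z)
    have kc4 := hcyc (s (θB x)) (s y) (s z)
    have kc5 := hsw23 (s x) (θL (s y)) (s z)
    have kc6 := hsw23 (s x) (s (θB y)) (s z)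
    linear_combination (norm := module) -kder + kBder - kc3 + kc4 - kc5 + kc6
  · -- the class does not depend on the section
    intro s' ω' μ' hs'lin hs'sec hω' hμ'
    have hπlam : ∀ x, π (s x - s' x) = 0 := fun x => by
      rw [hπlin.map_sub, hsec, hs'sec, sub_self]
    let lam : B → A := fun x => (hmk _ (hπlam x)).choose
    have hilam : ∀ x, i (lam x) = s x - s' x := fun x => (hmk _ (hπlam x)).choose_spec
    have hs'eq : ∀ w, s' w = s w - i (lam w) := fun w => by rw [hilam]; abel
    refine ⟨lam, ⟨fun a b => hinj' ?_, fun c a => hinj' ?_⟩, ?_, ?_⟩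
    · simp only [hilin.map_add, hilam, hslin.map_add, hs'lin.map_add]
      abel
    · simp only [hilin.map_smul, hilam, hslin.map_smul, hs'lin.map_smul, smul_sub]
    · intro x y z
      simp only [d1c]
      apply hinj'
      simp only [hilin.map_sub, hilin.map_add, hiρ, hiω, hω', hilam]
      simp only [hs'eq]
      simp only [h1sub, h2sub, h3sub, hab, hab13, hab23]
      have k7 := hcyc (i (lam x)) (s y) (s z)
      have k8 := hsw23 (s x) (i (lam y)) (s z)
      linear_combination (norm := module) k7 + k8
    · intro x
      simp only [delta1c]
      apply hinj'
      simp only [hilin.map_sub, hilin.map_neg, hiμ, hμ', hiθ, hilam, hLθ.map_sub]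
      abel
end

section
/- Let (B,θ_B) be a 3-LieDer pair and (A;ρ,θ_A) a representation of (B,θ_B). Then there is a one-to-one correspondence between equivalence classes of abelian extensions of (B,θ_B) by (A,θ_A) inducing the representation ρ and the second cohomology group H²_{3-LieDer}(B;A): the class of an extension is [(ω,μ)] where, for a section s, ω(x,y,z) = [s(x),s(y),s(z)]_L − s([x,y,z]_B) and μ(x) = θ_L(s(x)) − s(θ_B(x)); conversely each class [(ψ,λ)] yields the extension (B ⋉_{ρ,ψ} A, θ_λ), and two extensions are equivalent if and only if their classes agree. -/
open Function Finset

/-- Auxiliary computations inside an abelian extension equipped with a section. -/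
lemma ext_aux {F A Lt B : Type*} [Field F] [AddCommGroup A] [Module F A]
    [AddCommGroup Lt] [Module F Lt] [AddCommGroup B] [Module F B]
    (brA : A → A → A → A) (θA : A → A)
    (brL : Lt → Lt → Lt → Lt) (θL : Lt → Lt)
    (brB : B → B → B → B) (θB : B → B) (ρ : B → B → A → A)
    (i : A → Lt) (π : Lt → B)
    (hext : IsAbelianExtension F brA θA brL θL brB θB i π)
    (s : B → Lt) (hs : ∀ b, π (s b) = b)
    (hρs : ∀ x y a, i (ρ x y a) = brL (s x) (s y) (i a))
    (ω : B → B → B → A) (μ : B → A)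
    (hω : ∀ x y z, i (ω x y z) = brL (s x) (s y) (s z) - s (brB x y z))
    (hμ : ∀ x, i (μ x) = θL (s x) - s (θB x)) :
    (∀ x y z (a b c : A), brL (s x + i a) (s y + i b) (s z + i c)
        = s (brB x y z) + i (ω x y z + ρ y z a - ρ x z b + ρ x y c)) ∧
    (∀ x (a : A), θL (s x + i a) = s (θB x) + i (μ x + θA a)) ∧
    (∀ x (a : A), π (s x + i a) = x) ∧
    (∀ p : Lt, ∃ a : A, p = s (π p) + i a) := by
  obtain ⟨_, ⟨hLt, hLs, _, hθLl, _⟩, _, ⟨hil, hib, hiθ⟩, ⟨hπl, hπb, hπθ⟩,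
    hiinj, hsurj, hker, hab⟩ := hext
  have hadd1 : ∀ u v p q, brL (p + q) u v = brL p u v + brL q u v :=
    fun u v p q => (hLt.1 u v).map_add p q
  have hadd2 : ∀ u v p q, brL u (p + q) v = brL u p v + brL u q v :=
    fun u v p q => (hLt.2.1 u v).map_add p q
  have hadd3 : ∀ u v p q, brL u v (p + q) = brL u v p + brL u v q :=
    fun u v p q => (hLt.2.2 u v).map_add p q
  have hva : ∀ (a b : A) (p : Lt), brL (i a) (i b) p = 0 := hab
  have hvb : ∀ (a b : A) (p : Lt), brL (i a) p (i b) = 0 := fun a b p => by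
    rw [hLs.2 (i a) p (i b), hva, neg_zero]
  have hvc : ∀ (a b : A) (p : Lt), brL p (i a) (i b) = 0 := fun a b p => by
    rw [hLs.1 p (i a) (i b), hvb, neg_zero]
  have hcr1 : ∀ x y (a : A), brL (i a) (s x) (s y) = i (ρ x y a) := fun x y a => by
    rw [hLs.1 (i a) (s x) (s y), hLs.2 (s x) (i a) (s y), neg_neg, ← hρs]
  have hcr2 : ∀ x y (a : A), brL (s x) (i a) (s y) = - i (ρ x y a) := fun x y a => by
    rw [hLs.2 (s x) (i a) (s y), hρs]
  have hsss : ∀ x y z, brL (s x) (s y) (s z) = i (ω x y z) + s (brB x y z) :=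
    fun x y z => by rw [hω x y z]; abel
  have hπi : ∀ a : A, π (i a) = 0 := fun a => (hker (i a)).mpr ⟨a, rfl⟩
  refine ⟨?_, ?_, ?_, ?_⟩
  · intro x y z a b c
    rw [hadd1, hadd2, hadd2, hadd3, hadd3, hadd3, hadd3]
    simp only [hva, hvb, hvc, hcr1, hcr2, add_zero, zero_add]
    rw [← hρs, hsss, hil.map_add, hil.map_sub, hil.map_add]
    abel
  · intro x a
    have h1 : θL (s x) = i (μ x) + s (θB x) := by rw [hμ x]; abel
    rw [hθLl.map_add, h1, ← hiθ, hil.map_add]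
    abel
  · intro x a
    rw [hπl.map_add, hs, hπi, add_zero]
  · intro p
    have h1 : π (p - s (π p)) = 0 := by rw [hπl.map_sub, hs, sub_self]
    obtain ⟨a, ha⟩ := (hker _).mp h1
    exact ⟨a, by rw [ha]; abel⟩

/-- Equivalence classes of abelian extensions of `(B,θB)` by
`(A,θA)` inducing the representation `ρ` are in one-to-one correspondence with
`H²_{3-LieDer}(B;A)`.  Concretely: (I) two abelian extensions are equivalent if and
only if the cocycles `(ω₁,μ₁)` and `(ω₂,μ₂)` obtained from sections differ by a
coboundary `∂λ = (dλ, -δλ)`; and (II) every 2-cocycle `(ψ,λ)` is realized by the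
semidirect-type extension `0 → A → B ⋉_{ρ,ψ} A → B → 0` with derivation `θ_λ` and
section `b ↦ (b,0)`. -/
theorem statement17 {F A B L1 L2 : Type*} [Field F] [CharZero F]
    [AddCommGroup A] [Module F A] [FiniteDimensional F A]
    [AddCommGroup B] [Module F B] [FiniteDimensional F B]
    [AddCommGroup L1] [Module F L1] [FiniteDimensional F L1]
    [AddCommGroup L2] [Module F L2] [FiniteDimensional F L2]
    (brA : A → A → A → A) (θA : A → A)
    (brB : B → B → B → B) (θB : B → B)
    (ρ : B → B → A → A) (hrep : IsRepPair F brB θB ρ θA)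
    -- two abelian extensions of (B,θB) by (A,θA)
    (brL1 : L1 → L1 → L1 → L1) (θL1 : L1 → L1) (i1 : A → L1) (π1 : L1 → B)
    (hext1 : IsAbelianExtension F brA θA brL1 θL1 brB θB i1 π1)
    (brL2 : L2 → L2 → L2 → L2) (θL2 : L2 → L2) (i2 : A → L2) (π2 : L2 → B)
    (hext2 : IsAbelianExtension F brA θA brL2 θL2 brB θB i2 π2)
    -- sections, both inducing the given representation ρ
    (s1 : B → L1) (hs1lin : IsLinearMap F s1) (hs1 : ∀ b, π1 (s1 b) = b)
    (hρ1 : ∀ x y a, i1 (ρ x y a) = brL1 (s1 x) (s1 y) (i1 a))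
    (s2 : B → L2) (hs2lin : IsLinearMap F s2) (hs2 : ∀ b, π2 (s2 b) = b)
    (hρ2 : ∀ x y a, i2 (ρ x y a) = brL2 (s2 x) (s2 y) (i2 a))
    -- the associated cocycles
    (ω1 : B → B → B → A) (μ1 : B → A)
    (hω1 : ∀ x y z, i1 (ω1 x y z) = brL1 (s1 x) (s1 y) (s1 z) - s1 (brB x y z))
    (hμ1 : ∀ x, i1 (μ1 x) = θL1 (s1 x) - s1 (θB x))
    (ω2 : B → B → B → A) (μ2 : B → A)
    (hω2 : ∀ x y z, i2 (ω2 x y z) = brL2 (s2 x) (s2 y) (s2 z) - s2 (brB x y z))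
    (hμ2 : ∀ x, i2 (μ2 x) = θL2 (s2 x) - s2 (θB x)) :
    -- (I) the two extensions are equivalent iff the cocycles are cohomologous
    ((∃ η : L1 → L2, IsLinearMap F η ∧
        (∀ p q r, η (brL1 p q r) = brL2 (η p) (η q) (η r)) ∧
        (∀ p, η (θL1 p) = θL2 (η p)) ∧
        (∀ a, η (i1 a) = i2 a) ∧ (∀ p, π2 (η p) = π1 p))
      ↔ (∃ lam : B → A, IsLinearMap F lam ∧
          (∀ x y z, ω1 x y z - ω2 x y z = d1c brB ρ lam x y z) ∧
          (∀ x, μ1 x - μ2 x = - delta1c θB θA lam x))) ∧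
    -- (II) every 2-cocycle is realized by an abelian extension with section b ↦ (b,0)
    (∀ (ψ : B → B → B → A) (lam : B → A),
      IsTrilin F ψ → SkewTri ψ → IsLinearMap F lam →
      d2c brB ρ ψ = 0 → d1c brB ρ lam + delta2c θB θA ψ = 0 →
      IsAbelianExtension F brA θA (extBracket brB ρ ψ) (extDer θB θA lam) brB θB
          (fun a => ((0 : B), a)) (fun p => p.1) ∧
        (∀ x y z, extBracket brB ρ ψ (x, (0:A)) (y, 0) (z, 0) - ((brB x y z, 0) : B × A)
            = (0, ψ x y z)) ∧
        (∀ x, extDer θB θA lam (x, (0:A)) - ((θB x, 0) : B × A) = (0, lam x))) := by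
  obtain ⟨⟨hρl1, hρl2, hρl3, hρsk, hρ5, hρ6⟩, hρθ⟩ := hrep
  obtain ⟨hbr1, hθe1, hπf1, hdec1⟩ :=
    ext_aux brA θA brL1 θL1 brB θB ρ i1 π1 hext1 s1 hs1 hρ1 ω1 μ1 hω1 hμ1
  obtain ⟨hbr2, hθe2, hπf2, hdec2⟩ :=
    ext_aux brA θA brL2 θL2 brB θB ρ i2 π2 hext2 s2 hs2 hρ2 ω2 μ2 hω2 hμ2
  obtain ⟨⟨hAt, hAsk, hAf, hθAl, hθAd⟩, ⟨hL1t, hL1s, hL1f, hθL1l, hθL1d⟩,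
    ⟨hBt, hBsk, hBf, hθBl, hθBd⟩, ⟨hi1l, hi1b, hi1θ⟩, ⟨hπ1l, hπ1b, hπ1θ⟩,
    hi1inj, hπ1s, hker1, hab1⟩ := hext1
  obtain ⟨-, ⟨hL2t, hL2s, hL2f, hθL2l, hθL2d⟩, -, ⟨hi2l, hi2b, hi2θ⟩,
    ⟨hπ2l, hπ2b, hπ2θ⟩, hi2inj, hπ2s, hker2, hab2⟩ := hext2
  have hρadd : ∀ u v (w1 w2 : A), ρ u v (w1 + w2) = ρ u v w1 + ρ u v w2 :=
    fun u v w1 w2 => (hρl3 u v).map_add w1 w2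
  constructor
  · constructor
    · -- equivalence → cohomologous
      rintro ⟨η, hηl, hηb, hηθ, hηi, hηπ⟩
      have hex : ∀ x, ∃ a : A, i2 a = η (s1 x) - s2 x := fun x =>
        (hker2 _).mp (by rw [hπ2l.map_sub, hηπ, hs1, hs2, sub_self])
      choose lam hlam using hex
      have hηs : ∀ x, η (s1 x) = s2 x + i2 (lam x) := fun x => by rw [hlam]; abel
      refine ⟨lam, ⟨?_, ?_⟩, ?_, ?_⟩
      · intro x y
        apply hi2inj
        rw [hi2l.map_add, hlam, hlam, hlam, hs1lin.map_add, hs2lin.map_add,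
          hηl.map_add]
        abel
      · intro c x
        apply hi2inj
        rw [hi2l.map_smul, hlam, hlam, hs1lin.map_smul, hs2lin.map_smul,
          hηl.map_smul, smul_sub]
      · intro x y z
        apply hi2inj
        have e1 : i2 (ω1 x y z)
            = brL2 (s2 x + i2 (lam x)) (s2 y + i2 (lam y)) (s2 z + i2 (lam z))
              - (s2 (brB x y z) + i2 (lam (brB x y z))) := by
          rw [← hηi, hω1, hηl.map_sub, hηb]
          simp only [hηs]
        rw [hbr2] at e1
        simp only [d1c, hi2l.map_sub, hi2l.map_add] at e1 ⊢
        linear_combination (norm := abel) e1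
      · intro x
        apply hi2inj
        have e1 : i2 (μ1 x)
            = θL2 (s2 x + i2 (lam x)) - (s2 (θB x) + i2 (lam (θB x))) := by
          rw [← hηi, hμ1, hηl.map_sub, hηθ]
          simp only [hηs]
        rw [hθe2] at e1
        simp only [delta1c, hi2l.map_sub, hi2l.map_add, hi2l.map_neg] at e1 ⊢
        linear_combination (norm := abel) e1
    · -- cohomologous → equivalence
      rintro ⟨lam, hlaml, hlω, hlμ⟩
      choose r0 hr0 using hdec1
      have hrform : ∀ x (a : A), r0 (s1 x + i1 a) = a := by
        intro x a
        have h1 := hr0 (s1 x + i1 a)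
        rw [hπf1] at h1
        exact (hi1inj (add_left_cancel h1.symm))
      have hηform : ∀ x (a : A),
          s2 (π1 (s1 x + i1 a)) + i2 (lam (π1 (s1 x + i1 a)) + r0 (s1 x + i1 a))
            = s2 x + i2 (lam x + a) := by
        intro x a; rw [hπf1, hrform]
      have hradd : ∀ p q, r0 (p + q) = r0 p + r0 q := by
        intro p q
        have h1 : p + q = s1 (π1 (p + q)) + i1 (r0 p + r0 q) := by
          rw [hπ1l.map_add, hs1lin.map_add, hi1l.map_add]
          nth_rewrite 1 [hr0 p]
          nth_rewrite 1 [hr0 q]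
          abel
        calc r0 (p + q) = r0 (s1 (π1 (p + q)) + i1 (r0 p + r0 q)) := by rw [← h1]
          _ = r0 p + r0 q := hrform _ _
      have hrsmul : ∀ (c : F) p, r0 (c • p) = c • r0 p := by
        intro c p
        have h1 : c • p = s1 (π1 (c • p)) + i1 (c • r0 p) := by
          rw [hπ1l.map_smul, hs1lin.map_smul, hi1l.map_smul]
          nth_rewrite 1 [hr0 p]
          rw [smul_add]
        calc r0 (c • p) = r0 (s1 (π1 (c • p)) + i1 (c • r0 p)) := by rw [← h1]
          _ = c • r0 p := hrform _ _
      refine ⟨fun p => s2 (π1 p) + i2 (lam (π1 p) + r0 p), ⟨?_, ?_⟩, ?_, ?_, ?_, ?_⟩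
      · intro p q
        rw [hπ1l.map_add, hradd, hlaml.map_add, hs2lin.map_add, hi2l.map_add]
        simp only [hi2l.map_add]
        abel
      · intro c p
        rw [hπ1l.map_smul, hrsmul, hlaml.map_smul, hs2lin.map_smul, ← smul_add,
          hi2l.map_smul, smul_add]
      · -- bracket morphism
        intro p q w
        show s2 (π1 (brL1 p q w)) + i2 (lam (π1 (brL1 p q w)) + r0 (brL1 p q w))
          = brL2 (s2 (π1 p) + i2 (lam (π1 p) + r0 p))
              (s2 (π1 q) + i2 (lam (π1 q) + r0 q))
              (s2 (π1 w) + i2 (lam (π1 w) + r0 w))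
        have hbw : brL1 p q w = s1 (brB (π1 p) (π1 q) (π1 w))
            + i1 (ω1 (π1 p) (π1 q) (π1 w) + ρ (π1 q) (π1 w) (r0 p)
              - ρ (π1 p) (π1 w) (r0 q) + ρ (π1 p) (π1 q) (r0 w)) := by
          conv_lhs => rw [hr0 p, hr0 q, hr0 w]
          rw [hbr1]
        rw [hbw, hπf1, hrform, hbr2]
        congr 1
        apply congrArg i2
        have h := hlω (π1 p) (π1 q) (π1 w)
        simp only [d1c] at h
        simp only [hρadd]
        linear_combination (norm := abel) h
      · -- derivation morphism
        intro p
        show s2 (π1 (θL1 p)) + i2 (lam (π1 (θL1 p)) + r0 (θL1 p))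
          = θL2 (s2 (π1 p) + i2 (lam (π1 p) + r0 p))
        have hθw : θL1 p = s1 (θB (π1 p)) + i1 (μ1 (π1 p) + θA (r0 p)) := by
          conv_lhs => rw [hr0 p]
          rw [hθe1]
        rw [hθw, hπf1, hrform, hθe2]
        congr 1
        apply congrArg i2
        have h := hlμ (π1 p)
        simp only [delta1c] at h
        rw [hθAl.map_add]
        linear_combination (norm := abel) h
      · intro a
        show s2 (π1 (i1 a)) + i2 (lam (π1 (i1 a)) + r0 (i1 a)) = i2 a
        have h0 : (i1 a : L1) = s1 0 + i1 a := by rw [hs1lin.map_zero, zero_add]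
        rw [h0, hπf1, hrform, hlaml.map_zero, zero_add, hs2lin.map_zero, zero_add]
      · intro p
        show π2 (s2 (π1 p) + i2 (lam (π1 p) + r0 p)) = π1 p
        exact hπf2 _ _
  · -- (II)
    intro ψ lam hψt hψsk hlaml hd2 hdel
    -- pointwise forms of the cocycle conditions
    have hd2' : ∀ b1 b2 b3 b4 b5, d2c brB ρ ψ b1 b2 b3 b4 b5 = 0 :=
      fun b1 b2 b3 b4 b5 => by rw [hd2]; rfl
    have hdel' : ∀ x y z, d1c brB ρ lam x y z + delta2c θB θA ψ x y z = 0 :=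
      fun x y z => by
        have := congrFun (congrFun (congrFun hdel x) y) z
        simpa using this
    -- additivity / smul / zero lemma farm
    have hBa1 : ∀ y z p q, brB (p + q) y z = brB p y z + brB q y z :=
      fun y z p q => (hBt.1 y z).map_add p q
    have hBa2 : ∀ x z p q, brB x (p + q) z = brB x p z + brB x q z :=
      fun x z p q => (hBt.2.1 x z).map_add p q
    have hBa3 : ∀ x y p q, brB x y (p + q) = brB x y p + brB x y q :=
      fun x y p q => (hBt.2.2 x y).map_add p q
    have hBm1 : ∀ y z (c : F) p, brB (c • p) y z = c • brB p y z :=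
      fun y z c p => (hBt.1 y z).map_smul c p
    have hBm2 : ∀ x z (c : F) p, brB x (c • p) z = c • brB x p z :=
      fun x z c p => (hBt.2.1 x z).map_smul c p
    have hBm3 : ∀ x y (c : F) p, brB x y (c • p) = c • brB x y p :=
      fun x y c p => (hBt.2.2 x y).map_smul c p
    have hB01 : ∀ y z, brB 0 y z = 0 := fun y z => (hBt.1 y z).map_zero
    have hB02 : ∀ x z, brB x 0 z = 0 := fun x z => (hBt.2.1 x z).map_zero
    have hψa1 : ∀ y z p q, ψ (p + q) y z = ψ p y z + ψ q y z :=
      fun y z p q => (hψt.1 y z).map_add p q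
    have hψa2 : ∀ x z p q, ψ x (p + q) z = ψ x p z + ψ x q z :=
      fun x z p q => (hψt.2.1 x z).map_add p q
    have hψa3 : ∀ x y p q, ψ x y (p + q) = ψ x y p + ψ x y q :=
      fun x y p q => (hψt.2.2 x y).map_add p q
    have hψm1 : ∀ y z (c : F) p, ψ (c • p) y z = c • ψ p y z :=
      fun y z c p => (hψt.1 y z).map_smul c p
    have hψm2 : ∀ x z (c : F) p, ψ x (c • p) z = c • ψ x p z :=
      fun x z c p => (hψt.2.1 x z).map_smul c p
    have hψm3 : ∀ x y (c : F) p, ψ x y (c • p) = c • ψ x y p :=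
      fun x y c p => (hψt.2.2 x y).map_smul c p
    have hψ01 : ∀ y z, ψ 0 y z = 0 := fun y z => (hψt.1 y z).map_zero
    have hρa1 : ∀ y (v : A) p q, ρ (p + q) y v = ρ p y v + ρ q y v :=
      fun y v p q => (hρl1 y v).map_add p q
    have hρa2 : ∀ x (v : A) p q, ρ x (p + q) v = ρ x p v + ρ x q v :=
      fun x v p q => (hρl2 x v).map_add p q
    have hρm1 : ∀ y (v : A) (c : F) p, ρ (c • p) y v = c • ρ p y v :=
      fun y v c p => (hρl1 y v).map_smul c p
    have hρm2 : ∀ x (v : A) (c : F) p, ρ x (c • p) v = c • ρ x p v :=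
      fun x v c p => (hρl2 x v).map_smul c p
    have hρm3 : ∀ x y (c : F) (v : A), ρ x y (c • v) = c • ρ x y v :=
      fun x y c v => (hρl3 x y).map_smul c v
    have hρ01 : ∀ y (v : A), ρ 0 y v = 0 := fun y v => (hρl1 y v).map_zero
    have hρ02 : ∀ x (v : A), ρ x 0 v = 0 := fun x v => (hρl2 x v).map_zero
    have hρ03 : ∀ x y, ρ x y (0 : A) = 0 := fun x y => (hρl3 x y).map_zero
    have hθAa : ∀ u v : A, θA (u + v) = θA u + θA v := fun u v => hθAl.map_add u v
    have hswap : ∀ u v x y (w : A), ρ u v (ρ x y w) = - ρ u v (ρ y x w) := by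
      intro u v x y w
      rw [hρsk y x w, (hρl3 u v).map_neg, neg_neg]
    have hbrA0 : ∀ a b c : A, brA a b c = 0 := fun a b c =>
      hi1inj (by rw [hi1b, hab1, hi1l.map_zero])
    refine ⟨⟨⟨hAt, hAsk, hAf, hθAl, hθAd⟩, ⟨?_, ?_, ?_, ?_, ?_⟩,
      ⟨hBt, hBsk, hBf, hθBl, hθBd⟩, ⟨?_, ?_, ?_⟩, ⟨?_, ?_, ?_⟩, ?_, ?_, ?_, ?_⟩,
      ?_, ?_⟩
    · -- trilinearity of extBracket
      refine ⟨fun q r => ⟨fun p p' => ?_, fun c p => ?_⟩,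
        fun q r => ⟨fun p p' => ?_, fun c p => ?_⟩,
        fun q r => ⟨fun p p' => ?_, fun c p => ?_⟩⟩ <;>
        simp only [extBracket, Prod.fst_add, Prod.snd_add, Prod.smul_fst,
          Prod.smul_snd, hBa1, hBa2, hBa3, hBm1, hBm2, hBm3, hψa1, hψa2, hψa3,
          hψm1, hψm2, hψm3, hρa1, hρa2, hρadd, hρm1, hρm2, hρm3,
          Prod.mk_add_mk, Prod.smul_mk, smul_add, Prod.mk.injEq] <;>
        first
          | trivial
          | exact ⟨by trivial, by first | trivial | abel⟩
    · -- skew-symmetry of extBracket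
      constructor <;> intro p q r <;>
        simp only [extBracket, Prod.neg_mk, Prod.mk.injEq]
      · refine ⟨hBsk.1 _ _ _, ?_⟩
        linear_combination (norm := abel) hψsk.1 p.1 q.1 r.1 + hρsk p.1 q.1 r.2
          + hρsk q.1 r.1 p.2 + hρsk r.1 p.1 q.2
      · refine ⟨hBsk.2 _ _ _, ?_⟩
        linear_combination (norm := abel) hψsk.2 p.1 q.1 r.1 + hρsk p.1 q.1 r.2
          + hρsk q.1 r.1 p.2 + hρsk r.1 p.1 q.2
    · -- fundamental identity of extBracket
      intro x1 x2 x3 x4 x5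
      simp only [extBracket, Prod.mk_add_mk, Prod.mk.injEq]
      refine ⟨hBf _ _ _ _ _, ?_⟩
      set b1 := x1.1; set b2 := x2.1; set b3 := x3.1; set b4 := x4.1; set b5 := x5.1
      set a1 := x1.2; set a2 := x2.2; set a3 := x3.2; set a4 := x4.2; set a5 := x5.2
      have hψ1 : ψ b1 b2 (brB b3 b4 b5)
          = ψ (brB b1 b2 b3) b4 b5 + ψ b3 (brB b1 b2 b4) b5 + ψ b3 b4 (brB b1 b2 b5)
            - ρ b1 b2 (ψ b3 b4 b5) + ρ b3 b4 (ψ b1 b2 b5) + ρ b4 b5 (ψ b1 b2 b3)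
            + ρ b5 b3 (ψ b1 b2 b4) := by
        have h := hd2' b1 b2 b3 b4 b5
        simp only [d2c] at h
        linear_combination (norm := abel) h - hρsk b5 b3 (ψ b1 b2 b4)
      have ha1 : ρ b2 (brB b3 b4 b5) a1
          = ρ b4 b5 (ρ b2 b3 a1) + ρ b5 b3 (ρ b2 b4 a1) + ρ b3 b4 (ρ b2 b5 a1) := by
        linear_combination (norm := abel) hρ6 b2 b3 b4 b5 a1 - hρsk b5 b3 (ρ b2 b4 a1)
      have ha2 : ρ (brB b3 b4 b5) b1 a2
          = ρ b4 b5 (ρ b3 b1 a2) + ρ b5 b3 (ρ b4 b1 a2) + ρ b3 b4 (ρ b5 b1 a2) := by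
        linear_combination (norm := abel) hρsk (brB b3 b4 b5) b1 a2
          - hρ6 b1 b3 b4 b5 a2 - hswap b4 b5 b3 b1 a2 - hswap b5 b3 b4 b1 a2
          + hρsk b5 b3 (ρ b1 b4 a2) - hswap b3 b4 b5 b1 a2
      simp only [hρadd]
      rw [hψ1, ha1, ha2, hρ5 b1 b2 b3 b4 a5, hρ5 b1 b2 b4 b5 a3, hρ5 b1 b2 b5 b3 a4]
      abel
    · -- linearity of extDer
      exact ⟨fun p q => by
          simp only [extDer, Prod.fst_add, Prod.snd_add, hθBl.map_add,
            hlaml.map_add, hθAa, Prod.mk_add_mk, Prod.mk.injEq]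
          exact ⟨by trivial, by abel⟩,
        fun c p => by
          simp only [extDer, Prod.smul_fst, Prod.smul_snd, hθBl.map_smul,
            hlaml.map_smul, hθAl.map_smul, Prod.smul_mk, smul_add]⟩
    · -- extDer is a derivation of extBracket
      intro p q w
      simp only [extBracket, extDer, Prod.mk_add_mk, Prod.mk.injEq]
      refine ⟨hθBd _ _ _, ?_⟩
      have h := hdel' p.1 q.1 w.1
      simp only [d1c, delta2c] at h
      simp only [hθAa, hρadd]
      linear_combination (norm := abel) - h + hρθ p.1 q.1 w.2 + hρθ q.1 w.1 p.2
        + hρθ w.1 p.1 q.2 - hρsk w.1 p.1 (lam q.1)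
    · -- i is linear
      exact ⟨fun a b => by simp [Prod.mk_add_mk], fun c a => by simp [Prod.smul_mk]⟩
    · -- i is a bracket morphism
      intro a b c
      simp only [extBracket, hbrA0, hB01, hψ01, hρ01, add_zero, zero_add]
    · -- i commutes with the derivations
      intro a
      simp only [extDer, hθBl.map_zero, hlaml.map_zero, zero_add]
    · -- π is linear
      exact ⟨fun p q => rfl, fun c p => rfl⟩
    · -- π is a bracket morphism
      intro p q r; rfl
    · -- π commutes with the derivations
      intro p; rfl
    · -- i injective
      intro a b h
      exact congrArg Prod.snd h
    · -- π surjective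
      exact fun b => ⟨(b, 0), rfl⟩
    · -- exactness
      intro p
      constructor
      · intro h
        exact ⟨p.2, Prod.ext h.symm rfl⟩
      · rintro ⟨a, rfl⟩
        rfl
    · -- abelian ideal
      intro a b p
      simp only [extBracket, hB01, hψ01, hρ01, hρ02, add_zero, zero_add]
      rfl
    · -- the cocycle of the semidirect extension
      intro x y z
      simp only [extBracket, hρ03, add_zero, Prod.mk_sub_mk, sub_self, zero_add]
      rw [sub_zero]
    · -- the 1-cochain of the semidirect extension
      intro x
      simp only [extDer, hθAl.map_zero, add_zero, Prod.mk_sub_mk, sub_self, sub_zero]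
end

section
/- There is a one-to-one correspondence between strict 3-Lie2Der pairs and crossed modules of 3-LieDer pairs. Explicitly: given a strict 3-Lie2Der pair ((V₁,V₀,d,l₃,0);(X₀,X₁,0)), set A = V₁ with bracket [u,v,w]_A = l₃(du,dv,w), B = V₀ with bracket [x,y,z]_B = l₃(x,y,z), ρ(x,y)(u) = l₃(x,y,u), and η = d; then ((A,X₁),(B,X₀),(A;ρ,X₁),η) is a crossed module of 3-LieDer pairs; conversely, every crossed module of 3-LieDer pairs arises in this way from a unique strict 3-Lie2Der pair. -/
open Function Finset

section Strict

variable {F V0 V1 : Type*} [Field F] [AddCommGroup V0] [Module F V0]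
  [AddCommGroup V1] [Module F V1]

/-- Multilinearity and skew-symmetry of the structure maps `m0 = l₃|_{V0³}` and
`m1 = l₃|_{V0×V0×V1}` of a strict 3-Lie 2-algebra (`l₅ = 0`); the mixed placements
of `l₃` are determined by total skew-symmetry. -/
def StrictDataOK (F : Type*) {V0 V1 : Type*} [Field F] [AddCommGroup V0] [Module F V0]
    [AddCommGroup V1] [Module F V1]
    (m0 : V0 → V0 → V0 → V0) (m1 : V0 → V0 → V1 → V1) : Prop :=
  IsTrilin F m0 ∧ SkewTri m0 ∧
  (∀ y v, IsLinearMap F (fun x => m1 x y v)) ∧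
  (∀ x v, IsLinearMap F (fun y => m1 x y v)) ∧
  (∀ x y, IsLinearMap F (m1 x y)) ∧
  (∀ x y v, m1 x y v = - m1 y x v)

/-- The axioms (a)–(g) of a *strict* 3-Lie 2-algebra `(V1, V0, d, l3, 0)`, written in
terms of `m0` and `m1`. -/
def StrictTwoAlgAxioms (d : V1 → V0) (m0 : V0 → V0 → V0 → V0)
    (m1 : V0 → V0 → V1 → V1) : Prop :=
  -- (a)
  (∀ x y v, d (m1 x y v) = m0 x y (d v)) ∧
  -- (c)
  (∀ (u v : V1) (x : V0), m1 (d u) x v = - m1 (d v) x u) ∧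
  -- (d) (with l₅ = 0)
  (∀ x1 x2 x3 x4 x5,
      (0 : V0) = m0 (m0 x1 x2 x3) x4 x5 + m0 x3 (m0 x1 x2 x4) x5
        + m0 x3 x4 (m0 x1 x2 x5) - m0 x1 x2 (m0 x3 x4 x5)) ∧
  -- (e) (with l₅ = 0)
  (∀ (u : V1) (x2 x3 x4 x5 : V0),
      (0 : V1) = m1 x4 x5 (m1 x2 x3 u) - m1 x3 x5 (m1 x2 x4 u)
        + m1 x3 x4 (m1 x2 x5 u) - m1 x2 (m0 x3 x4 x5) u) ∧
  -- (f) (with l₅ = 0)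
  (∀ (u : V1) (x1 x2 x4 x5 : V0),
      (0 : V1) = m1 x4 x5 (m1 x1 x2 u) + m1 (m0 x1 x2 x4) x5 u
        + m1 x4 (m0 x1 x2 x5) u - m1 x1 x2 (m1 x4 x5 u))

/-- The axioms of a *strict* 2-derivation `(X0, X1, 0)` of a strict 3-Lie 2-algebra. -/
def StrictTwoDerAxioms (d : V1 → V0) (m0 : V0 → V0 → V0 → V0)
    (m1 : V0 → V0 → V1 → V1) (X0 : V0 → V0) (X1 : V1 → V1) : Prop :=
  -- (a)
  (∀ v, X0 (d v) = d (X1 v)) ∧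
  -- (b)
  (∀ x y z, X0 (m0 x y z) = m0 (X0 x) y z + m0 x (X0 y) z + m0 x y (X0 z)) ∧
  -- (c) (with lX = 0)
  (∀ x y v, X1 (m1 x y v) = m1 (X0 x) y v + m1 x (X0 y) v + m1 x y (X1 v))

/-- `((A,θA), (B,θB), (A;ρ,θA), η)` is a crossed module of 3-LieDer pairs. -/
def IsCrossedModule (F : Type*) {A B : Type*} [Field F] [AddCommGroup A] [Module F A]
    [AddCommGroup B] [Module F B]
    (brA : A → A → A → A) (θA : A → A) (brB : B → B → B → B) (θB : B → B)
    (ρ : B → B → A → A) (η : A → B) : Prop :=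
  -- (A, θA) and (B, θB) are 3-LieDer pairs
  (IsTrilin F brA ∧ SkewTri brA ∧ FundId brA ∧ IsLinearMap F θA ∧ IsDeriv3 brA θA) ∧
  (IsTrilin F brB ∧ SkewTri brB ∧ FundId brB ∧ IsLinearMap F θB ∧ IsDeriv3 brB θB) ∧
  -- (A; ρ, θA) is a representation of the 3-LieDer pair (B, θB)
  IsRepPair F brB θB ρ θA ∧
  -- η is a morphism of 3-LieDer pairs
  (IsLinearMap F η ∧ (∀ u v w, η (brA u v w) = brB (η u) (η v) (η w)) ∧
    (∀ u, η (θA u) = θB (η u))) ∧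
  -- the crossed module identities
  (∀ x y u, η (ρ x y u) = brB x y (η u)) ∧
  (∀ u v w, ρ (η u) (η v) w = brA u v w) ∧
  (∀ (x : B) (u v : A), ρ x (η u) v = - ρ x (η v) u) ∧
  (∀ x y u v w, ρ x y (brA u v w)
      = brA (ρ x y u) v w + brA u (ρ x y v) w + brA u v (ρ x y w))

end Strict

/-- Strict 3-Lie2Der pairs correspond one-to-one to crossed modules
of 3-LieDer pairs.  (i) Given a strict 3-Lie2Der pair `((V1,V0,d,l3,0);(X0,X1,0))`,
putting `A = V1` with `[u,v,w]_A = l3(du,dv,w)`, `B = V0` with `[·,·,·]_B = m0`,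
`ρ = m1` and `η = d` yields a crossed module of 3-LieDer pairs `((A,X1),(B,X0),(A;ρ,X1),d)`.
(ii) Conversely, every crossed module arises in this way from a unique strict
3-Lie2Der pair: the data `(V1,V0,d,m0,m1) = (A,B,η,brB,ρ)` satisfies the strict
axioms and recovers `[u,v,w]_A = ρ(η(u),η(v))w`. -/
theorem statement19 {F V0 V1 : Type*} [Field F] [CharZero F]
    [AddCommGroup V0] [Module F V0] [FiniteDimensional F V0]
    [AddCommGroup V1] [Module F V1] [FiniteDimensional F V1] :
    -- (i) from strict 3-Lie2Der pairs to crossed modules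
    (∀ (d : V1 → V0) (m0 : V0 → V0 → V0 → V0) (m1 : V0 → V0 → V1 → V1)
        (X0 : V0 → V0) (X1 : V1 → V1),
      IsLinearMap F d → StrictDataOK F m0 m1 →
      IsLinearMap F X0 → IsLinearMap F X1 →
      StrictTwoAlgAxioms d m0 m1 → StrictTwoDerAxioms d m0 m1 X0 X1 →
      IsCrossedModule F (fun u v w => m1 (d u) (d v) w) X1 m0 X0 m1 d) ∧
    -- (ii) every crossed module arises from a unique strict 3-Lie2Der pair
    (∀ (brA : V1 → V1 → V1 → V1) (θA : V1 → V1) (brB : V0 → V0 → V0 → V0)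
        (θB : V0 → V0) (ρ : V0 → V0 → V1 → V1) (η : V1 → V0),
      IsCrossedModule F brA θA brB θB ρ η →
      (StrictDataOK F brB ρ ∧ StrictTwoAlgAxioms η brB ρ ∧
        StrictTwoDerAxioms η brB ρ θB θA ∧
        ∀ u v w, brA u v w = ρ (η u) (η v) w)) := by
  constructor
  · rintro d m0 m1 X0 X1 hd ⟨hm0tri, hm0skew, hm1l1, hm1l2, hm1l3, hm1skew⟩
      hX0 hX1 ⟨ha, hc, hdd, he, hf⟩ ⟨hda, hdb, hdc⟩
    -- skew-symmetry of the induced bracket on A in the last two arguments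
    have hskew2 : ∀ u v w : V1, m1 (d u) (d v) w = - m1 (d u) (d w) v := by
      intro u v w
      rw [hm1skew (d u) (d v) w, hc v w (d u), hm1skew (d w) (d u) v]
      simp only [neg_neg]
    refine ⟨⟨?_, ⟨fun u v w => hm1skew (d u) (d v) w, hskew2⟩, ?_, hX1, ?_⟩,
      ⟨hm0tri, hm0skew, ?_, hX0, hdb⟩, ⟨⟨hm1l1, hm1l2, hm1l3, hm1skew, ?_, ?_⟩, ?_⟩,
      ⟨hd, fun u v w => ha (d u) (d v) w, fun u => (hda u).symm⟩,
      ha, fun u v w => rfl, ?_, ?_⟩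
    · -- trilinearity of brA
      refine ⟨fun v w => ⟨fun a b => ?_, fun c a => ?_⟩,
        fun u w => ⟨fun a b => ?_, fun c a => ?_⟩, fun u v => hm1l3 (d u) (d v)⟩
      · dsimp only; rw [hd.map_add, (hm1l1 (d v) w).map_add]
      · dsimp only; rw [hd.map_smul, (hm1l1 (d v) w).map_smul]
      · dsimp only; rw [hd.map_add, (hm1l2 (d u) w).map_add]
      · dsimp only; rw [hd.map_smul, (hm1l2 (d u) w).map_smul]
    · -- fundamental identity for brA
      intro x1 x2 x3 x4 x5
      simp only [ha]
      have h := hf x5 (d x1) (d x2) (d x3) (d x4)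
      rw [eq_comm, sub_eq_zero] at h
      rw [← h]; abel
    · -- X1 is a derivation of brA
      intro u v w
      rw [hdc, hda, hda]
    · -- fundamental identity for m0
      intro x1 x2 x3 x4 x5
      have h := hdd x1 x2 x3 x4 x5
      rw [eq_comm, sub_eq_zero] at h
      exact h.symm
    · -- representation identity (1)
      intro x1 x2 x3 x4 v
      have h := hf v x1 x2 x3 x4
      rw [eq_comm, sub_eq_zero] at h
      rw [← h]; abel
    · -- representation identity (2)
      intro x1 x2 x3 x4 v
      have h := he v x1 x2 x3 x4
      rw [eq_comm, sub_eq_zero] at h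
      exact h.symm
    · -- compatibility of X1 with the representation
      intro x y v
      rw [hdc]; abel
    · -- crossed module identity (3)
      intro x u v
      rw [hm1skew x (d u) v, hc u v x, hm1skew (d v) x u]
      simp only [neg_neg]
    · -- crossed module identity (4)
      intro x y u v w
      simp only [ha]
      have h := hf w x y (d u) (d v)
      rw [eq_comm, sub_eq_zero] at h
      rw [← h]; abel
  · rintro brA θA brB θB ρ η
      ⟨⟨hAtri, hAskew, hAfund, hθAlin, hAder⟩, ⟨hBtri, hBskew, hBfund, hθBlin, hBder⟩,
        ⟨⟨hρ1, hρ2, hρ3, hρ4, hρ5, hρ6⟩, hρθ⟩, ⟨hηlin, hηbr, hηθ⟩, hcm1, hcm2, hcm3, hcm4⟩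
    refine ⟨⟨hBtri, hBskew, hρ1, hρ2, hρ3, hρ4⟩, ⟨hcm1, ?_, ?_, ?_, ?_⟩,
      ⟨fun v => (hηθ v).symm, hBder, ?_⟩, fun u v w => (hcm2 u v w).symm⟩
    · -- axiom (c)
      intro u v x
      rw [hρ4 (η u) x v, hcm3 x u v, hρ4 x (η v) u]
      simp only [neg_neg]
    · -- axiom (d)
      intro x1 x2 x3 x4 x5
      rw [hBfund x1 x2 x3 x4 x5]; abel
    · -- axiom (e)
      intro u x2 x3 x4 x5
      rw [hρ6 x2 x3 x4 x5 u]; abel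
    · -- axiom (f)
      intro u x1 x2 x4 x5
      rw [hρ5 x1 x2 x4 x5 u]; abel
    · -- derivation axiom (c)
      intro x y v
      have h := hρθ x y v
      rw [sub_eq_iff_eq_add] at h
      exact h
end
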